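/- arXiv:1702.02254 — 16 statements merged into one kernel-verified Lean document; each statement's English description precedes it below -/
import Mathlib

section
/- Let c₁, c₂, r₁ be real numbers and define D(t) = (c₁ + c₂t)·e^{r₁t} for t ∈ [0,∞). Then D is a discount function if and only if c₁ = 1, r₁ < 0, and 0 ≤ c₂ ≤ −r₁. -/
/-!
D(0) = 1 gives c₁ = 1, and positivity of D on [0, ∞) forces c₂ ≥ 0. If moreover r₁ ≥ 0 then
D ≥ 1 on [0, ∞), contradicting D → 0, so r₁ < 0; and since D is antitone on [0, ∞), its
derivative D'(0) = c₂ + r₁ is nonpositive. Conversely, D'(t) = (c₂ + r₁ + r₁c₂t) e^{r₁t} < 0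
for t > 0, and D → 0 because exponential decay beats linear growth.
-/

def IsDiscount (D : ℝ → ℝ) : Prop :=
  D 0 = 1 ∧ (∀ t, 0 ≤ t → 0 < D t) ∧ StrictAntiOn D (Set.Ici 0) ∧
    Filter.Tendsto D Filter.atTop (nhds 0)

open Filter Topology Real Set

lemma HasDerivAt.nonpos_of_antitoneOn_Ici {g : ℝ → ℝ} {g' x : ℝ} (hd : HasDerivAt g g' x)
    (hg : AntitoneOn g (Ici x)) : g' ≤ 0 := by
  refine hd.hasDerivWithinAt.nonpos_of_antitoneOn ?_ hg
  rw [accPt_principal_iff_nhdsWithin, Ici_sdiff_left]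
  infer_instance

lemma hasDerivAt_add_mul_mul_exp (a c r t : ℝ) :
    HasDerivAt (fun t => (a + c * t) * exp (r * t)) ((c + r * (a + c * t)) * exp (r * t)) t := by
  have hlin : HasDerivAt (fun t => a + c * t) c t := by
    simpa using ((hasDerivAt_id t).const_mul c).const_add a
  have hexp : HasDerivAt (fun t => exp (r * t)) (exp (r * t) * r) t := by
    simpa using ((hasDerivAt_id t).const_mul r).exp
  exact (hlin.mul hexp).congr_deriv (by ring)

lemma tendsto_add_mul_mul_exp_atTop (a c : ℝ) {r : ℝ} (hr : r < 0) :
    Tendsto (fun t => (a + c * t) * exp (r * t)) atTop (𝓝 0) := by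
  have hexp : Tendsto (fun t => exp (r * t)) atTop (𝓝 0) :=
    tendsto_exp_atBot.comp (tendsto_id.const_mul_atTop_of_neg hr)
  have hid : Tendsto (fun t => t * exp (r * t)) atTop (𝓝 0) := by
    simpa using tendsto_rpow_mul_exp_neg_mul_atTop_nhds_zero 1 (-r) (neg_pos.2 hr)
  simpa [add_mul, mul_assoc] using (hexp.const_mul a).add (hid.const_mul c)

lemma nonneg_of_forall_one_add_mul_pos {c : ℝ} (h : ∀ t, 0 ≤ t → 0 < 1 + c * t) : 0 ≤ c := by
  by_contra! hc
  have := h (-1 / c) (div_nonneg_of_nonpos (by norm_num) hc.le)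
  rw [mul_div_cancel₀ _ hc.ne] at this
  norm_num at this

lemma one_le_one_add_mul_mul_exp {c r t : ℝ} (hc : 0 ≤ c) (hr : 0 ≤ r) (ht : 0 ≤ t) :
    1 ≤ (1 + c * t) * exp (r * t) :=
  one_le_mul_of_one_le_of_one_le (by nlinarith) (one_le_exp (by positivity))

lemma add_mul_one_add_mul_neg {c r t : ℝ} (hr : r < 0) (hc : 0 ≤ c) (hcr : c ≤ -r) (ht : 0 < t) :
    c + r * (1 + c * t) < 0 := by
  rcases hc.eq_or_lt with rfl | hc
  · simpa using hr
  · nlinarith [mul_pos hc ht]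

theorem linear_times_exp_discount (c₁ c₂ r₁ : ℝ) :
    IsDiscount (fun t => (c₁ + c₂ * t) * Real.exp (r₁ * t)) ↔
      c₁ = 1 ∧ r₁ < 0 ∧ 0 ≤ c₂ ∧ c₂ ≤ -r₁ := by
  constructor
  · rintro ⟨h0, hpos, hanti, hlim⟩
    obtain rfl : c₁ = 1 := by simpa using h0
    have hc₂ : 0 ≤ c₂ := nonneg_of_forall_one_add_mul_pos fun t ht ↦
      pos_of_mul_pos_left (hpos t ht) (exp_pos _).le
    have hr₁ : r₁ < 0 := by
      by_contra! hr₁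
      have := ge_of_tendsto hlim <| eventually_atTop.2
        ⟨0, fun t ht ↦ one_le_one_add_mul_mul_exp hc₂ hr₁ ht⟩
      norm_num at this
    have hslope : c₂ + r₁ ≤ 0 := by
      simpa using (hasDerivAt_add_mul_mul_exp 1 c₂ r₁ 0).nonpos_of_antitoneOn_Ici hanti.antitoneOn
    exact ⟨rfl, hr₁, hc₂, by linarith⟩
  · rintro ⟨rfl, hr₁, hc₂, hcr⟩
    refine ⟨by simp, fun t ht ↦ ?_, ?_, tendsto_add_mul_mul_exp_atTop 1 c₂ hr₁⟩
    · have : 0 < 1 + c₂ * t := by positivity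
      positivity
    · refine strictAntiOn_of_hasDerivWithinAt_neg (convex_Ici 0) (by fun_prop)
        (fun t _ ↦ (hasDerivAt_add_mul_mul_exp 1 c₂ r₁ t).hasDerivWithinAt) fun t ht ↦ ?_
      rw [interior_Ici] at ht
      exact mul_neg_of_neg_of_pos (add_mul_one_add_mul_neg hr₁ hc₂ hcr ht) (exp_pos _)
end

section
/- Let r ≥ c ≥ 0 with r > 0 and define D(t) = (1 + ct)·e^{−rt} for t ∈ [0,∞). Then D satisfies the extended one-switch property: every difference function of D satisfies the one-switch sign condition. -/
def OneSwitchSign (Δ : ℝ → ℝ) : Prop :=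
  (∀ σ, 0 ≤ σ → 0 < Δ σ) ∨ (∀ σ, 0 ≤ σ → Δ σ < 0) ∨ (∀ σ, 0 ≤ σ → Δ σ = 0) ∨
    ∃ σs : ℝ, 0 ≤ σs ∧ (∀ σ, 0 ≤ σ → (Δ σ = 0 ↔ σ = σs)) ∧
      (∀ σ' σ'', 0 ≤ σ' → 0 ≤ σ'' →
        ((σ' < σs ∧ σ'' < σs) ∨ (σs < σ' ∧ σs < σ'')) → 0 < Δ σ' * Δ σ'') ∧
      (∀ σ' σ'', 0 ≤ σ' → σ' < σs → σs < σ'' → Δ σ' * Δ σ'' < 0)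

noncomputable def diffFn {n m : ℕ} (D : ℝ → ℝ) (t : Fin n → ℝ) (s : Fin m → ℝ)
    (v : Fin n → ℝ) (w : Fin m → ℝ) : ℝ → ℝ :=
  fun σ => (∑ i, D (t i + σ) * v i) - (∑ j, D (s j + σ) * w j)

def ExtOneSwitch (D : ℝ → ℝ) : Prop :=
  ∀ (n m : ℕ), 0 < n → 0 < m →
    ∀ (t : Fin n → ℝ) (s : Fin m → ℝ) (v : Fin n → ℝ) (w : Fin m → ℝ),
      StrictMono t → StrictMono s → (∀ i, 0 ≤ t i) → (∀ j, 0 ≤ s j) →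
      (∀ i, 0 ≤ v i) → (∀ j, 0 ≤ w j) → OneSwitchSign (diffFn D t s v w)

lemma oss_neg (f : ℝ → ℝ) (h : OneSwitchSign f) : OneSwitchSign (fun σ => -f σ) := by
  rcases h with h | h | h | ⟨σs, h0, h1, h2, h3⟩
  · exact Or.inr (Or.inl fun σ hσ => by simpa using h σ hσ)
  · exact Or.inl fun σ hσ => by simpa using h σ hσ
  · exact Or.inr (Or.inr (Or.inl fun σ hσ => by simp [h σ hσ]))
  · refine Or.inr (Or.inr (Or.inr ⟨σs, h0, ?_, ?_, ?_⟩))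
    · intro σ hσ; simpa using h1 σ hσ
    · intro σ' σ'' h' h'' hcase; simpa [neg_mul_neg] using h2 σ' σ'' h' h'' hcase
    · intro σ' σ'' h' hlt hgt
      have := h3 σ' σ'' h' hlt hgt
      simpa [neg_mul_neg] using this

lemma oss_pos_mul_affine_nonneg (g : ℝ → ℝ) (hg : ∀ σ, 0 < g σ) (A K : ℝ) (hK : 0 ≤ K) :
    OneSwitchSign (fun σ => g σ * (A + K * σ)) := by
  rcases hK.lt_or_eq with hKpos | hK0
  · rcases le_or_gt A 0 with hA | hA
    · -- switch at σs = -A/K ≥ 0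
      refine Or.inr (Or.inr (Or.inr ⟨-A / K, div_nonneg (by linarith) hKpos.le, ?_, ?_, ?_⟩))
      · intro σ hσ
        have hK' : K ≠ 0 := hKpos.ne'
        constructor
        · intro h
          have h2 : A + K * σ = 0 := by
            rcases mul_eq_zero.mp h with h' | h'
            · exact absurd h' (hg σ).ne'
            · exact h'
          field_simp
          linarith
        · intro h
          rw [h]
          have hz : A + K * (-A / K) = 0 := by field_simp; ring
          show g (-A / K) * (A + K * (-A / K)) = 0
          rw [hz, mul_zero]
      · intro σ' σ'' h' h'' hcase
        have hsign : ∀ σ : ℝ, σ < -A / K → g σ * (A + K * σ) < 0 := by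
          intro σ hlt
          have : A + K * σ < 0 := by nlinarith [(lt_div_iff₀ hKpos).mp hlt]
          exact mul_neg_of_pos_of_neg (hg σ) this
        have hsign' : ∀ σ : ℝ, -A / K < σ → 0 < g σ * (A + K * σ) := by
          intro σ hlt
          have : 0 < A + K * σ := by nlinarith [(div_lt_iff₀ hKpos).mp hlt]
          exact mul_pos (hg σ) this
        rcases hcase with ⟨l1, l2⟩ | ⟨l1, l2⟩
        · exact mul_pos_of_neg_of_neg (hsign _ l1) (hsign _ l2)
        · exact mul_pos (hsign' _ l1) (hsign' _ l2)
      · intro σ' σ'' h' hlt hgt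
        have n1 : g σ' * (A + K * σ') < 0 := by
          have : A + K * σ' < 0 := by nlinarith [(lt_div_iff₀ hKpos).mp hlt]
          exact mul_neg_of_pos_of_neg (hg σ') this
        have p2 : 0 < g σ'' * (A + K * σ'') := by
          have : 0 < A + K * σ'' := by nlinarith [(div_lt_iff₀ hKpos).mp hgt]
          exact mul_pos (hg σ'') this
        exact mul_neg_of_neg_of_pos n1 p2
    · exact Or.inl fun σ hσ => mul_pos (hg σ) (by nlinarith)
  · rcases lt_trichotomy A 0 with hA | hA | hA
    · exact Or.inr (Or.inl fun σ hσ => by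
        rw [← hK0]; exact mul_neg_of_pos_of_neg (hg σ) (by linarith))
    · exact Or.inr (Or.inr (Or.inl fun σ hσ => by rw [← hK0, hA]; ring))
    · exact Or.inl fun σ hσ => by rw [← hK0]; exact mul_pos (hg σ) (by linarith)

lemma oss_pos_mul_affine (g : ℝ → ℝ) (hg : ∀ σ, 0 < g σ) (A K : ℝ) :
    OneSwitchSign (fun σ => g σ * (A + K * σ)) := by
  rcases le_or_gt 0 K with hK | hK
  · exact oss_pos_mul_affine_nonneg g hg A K hK
  · have h := oss_neg _ (oss_pos_mul_affine_nonneg g hg (-A) (-K) (by linarith))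
    have heq : (fun σ => -(g σ * (-A + -K * σ))) = fun σ => g σ * (A + K * σ) := by
      funext σ; ring
    rwa [heq] at h

theorem linear_times_exp_one_switch (r c : ℝ) (hc : 0 ≤ c) (hcr : c ≤ r) (hr : 0 < r) :
    ExtOneSwitch (fun t => (1 + c * t) * Real.exp (-r * t)) := by
  intro n m hn hm t s v w hts hss ht hs hv hw
  have hsum : ∀ (σ : ℝ) (k : ℕ) (x u : Fin k → ℝ),
      ∑ i, (1 + c * (x i + σ)) * Real.exp (-r * (x i + σ)) * u i =
        Real.exp (-r * σ) * ((∑ i, (1 + c * x i) * Real.exp (-r * x i) * u i)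
          + c * σ * ∑ i, Real.exp (-r * x i) * u i) := by
    intro σ k x u
    have hterm : ∀ i : Fin k, (1 + c * (x i + σ)) * Real.exp (-r * (x i + σ)) * u i =
        Real.exp (-r * σ) * ((1 + c * x i) * Real.exp (-r * x i) * u i)
          + Real.exp (-r * σ) * (c * σ * (Real.exp (-r * x i) * u i)) := by
      intro i
      rw [show -r * (x i + σ) = -r * x i + -r * σ by ring, Real.exp_add]
      ring
    rw [Finset.sum_congr rfl (fun i _ => hterm i), Finset.sum_add_distrib,
      ← Finset.mul_sum, ← Finset.mul_sum, ← Finset.mul_sum, mul_add]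
  have key : diffFn (fun t => (1 + c * t) * Real.exp (-r * t)) t s v w =
      fun σ => Real.exp (-r * σ) *
        (((∑ i, (1 + c * t i) * Real.exp (-r * t i) * v i)
            - ∑ j, (1 + c * s j) * Real.exp (-r * s j) * w j)
          + (c * ((∑ i, Real.exp (-r * t i) * v i) - ∑ j, Real.exp (-r * s j) * w j)) * σ) := by
    funext σ
    simp only [diffFn]
    rw [hsum σ n t v, hsum σ m s w]
    ring
  rw [key]
  exact oss_pos_mul_affine _ (fun σ => Real.exp_pos _) _ _
end

section
/- Let a, b, c > 0 with a ≤ b/c + 1 and define D(t) = a·e^{−bt} + (1 − a)·e^{−(b+c)t} for t ∈ [0,∞). Then D satisfies the extended one-switch property: every difference function of D satisfies the one-switch sign condition. -/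
lemma oneSwitch_aux (Δ : ℝ → ℝ) (ε σs : ℝ) (hε : ε ≠ 0) (hσs : 0 ≤ σs)
    (hpos : ∀ σ, 0 ≤ σ → σ < σs → 0 < ε * Δ σ)
    (hzero : Δ σs = 0)
    (hneg : ∀ σ, σs < σ → ε * Δ σ < 0) : OneSwitchSign Δ := by
  have hε2 : 0 < ε ^ 2 := by positivity
  refine Or.inr (Or.inr (Or.inr ⟨σs, hσs, ?_, ?_, ?_⟩))
  · intro σ hσ
    constructor
    · intro h0
      rcases lt_trichotomy σ σs with h | h | h
      · have := hpos σ hσ h; rw [h0] at this; simp at this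
      · exact h
      · have := hneg σ h; rw [h0] at this; simp at this
    · rintro rfl; exact hzero
  · rintro σ' σ'' h' h'' (⟨h1, h2⟩ | ⟨h1, h2⟩)
    · have a1 := hpos σ' h' h1; have a2 := hpos σ'' h'' h2; nlinarith
    · have a1 := hneg σ' h1; have a2 := hneg σ'' h2; nlinarith
  · intro σ' σ'' h' h1 h2
    have a1 := hpos σ' h' h1; have a2 := hneg σ'' h2; nlinarith

theorem sum_of_exponentials_one_switch (a b c : ℝ) (ha : 0 < a) (hb : 0 < b) (hc : 0 < c)
    (habc : a ≤ b / c + 1) :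
    ExtOneSwitch (fun t => a * Real.exp (-b * t) + (1 - a) * Real.exp (-(b + c) * t)) := by
  intro n m hn hm t s v w _ _ _ _ _ _
  set D : ℝ → ℝ := fun t => a * Real.exp (-b * t) + (1 - a) * Real.exp (-(b + c) * t) with hDdef
  set A : ℝ := (∑ i, a * Real.exp (-b * t i) * v i) - (∑ j, a * Real.exp (-b * s j) * w j)
    with hA
  set B : ℝ := (∑ i, (1 - a) * Real.exp (-(b + c) * t i) * v i)
    - (∑ j, (1 - a) * Real.exp (-(b + c) * s j) * w j) with hB
  have e1 : ∀ x σ : ℝ, D (x + σ) = (a * Real.exp (-b * x)) * Real.exp (-b * σ)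
      + ((1 - a) * Real.exp (-(b + c) * x)) * (Real.exp (-b * σ) * Real.exp (-c * σ)) := by
    intro x σ
    simp only [hDdef]
    rw [show -b * (x + σ) = (-b * x) + (-b * σ) by ring,
      show -(b + c) * (x + σ) = (-(b + c) * x) + ((-b * σ) + (-c * σ)) by ring,
      Real.exp_add, Real.exp_add, Real.exp_add]
    ring
  have e2 : ∀ (N : ℕ) (u : Fin N → ℝ) (q : Fin N → ℝ) (σ : ℝ),
      (∑ i, D (u i + σ) * q i)
        = (∑ i, a * Real.exp (-b * u i) * q i) * Real.exp (-b * σ)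
          + (∑ i, (1 - a) * Real.exp (-(b + c) * u i) * q i)
            * (Real.exp (-b * σ) * Real.exp (-c * σ)) := by
    intro N u q σ
    rw [Finset.sum_mul, Finset.sum_mul, ← Finset.sum_add_distrib]
    refine Finset.sum_congr rfl fun i _ => ?_
    rw [e1]; ring
  have key : ∀ σ, diffFn D t s v w σ
      = Real.exp (-b * σ) * (A + B * Real.exp (-c * σ)) := by
    intro σ
    simp only [diffFn]
    rw [e2 n t v σ, e2 m s w σ, hA, hB]
    ring
  rcases eq_or_ne B 0 with hB0 | hB0
  · rcases lt_trichotomy A 0 with h | h | h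
    · refine Or.inr (Or.inl fun σ hσ => ?_)
      rw [key σ, hB0]
      have := Real.exp_pos (-b * σ)
      nlinarith
    · refine Or.inr (Or.inr (Or.inl fun σ hσ => ?_))
      rw [key σ, hB0, h]; ring
    · refine Or.inl fun σ hσ => ?_
      rw [key σ, hB0]
      have := Real.exp_pos (-b * σ)
      nlinarith
  · set r : ℝ := -A / B with hr
    have hAr : A = -(B * r) := by rw [hr]; field_simp
    have key2 : ∀ σ, diffFn D t s v w σ
        = Real.exp (-b * σ) * (B * (Real.exp (-c * σ) - r)) := by
      intro σ; rw [key σ, hAr]; ring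
    have hB2 : (0:ℝ) < B ^ 2 := by positivity
    rcases le_or_gt r 0 with hr0 | hr0
    · -- exp(-cσ) - r > 0 always; sign of Δ is sign of B
      rcases hB0.lt_or_gt with hBn | hBp
      · refine Or.inr (Or.inl fun σ hσ => ?_)
        rw [key2 σ]
        have h1 := Real.exp_pos (-b * σ); have h2 := Real.exp_pos (-c * σ)
        exact mul_neg_of_pos_of_neg h1 (mul_neg_of_neg_of_pos hBn (by linarith))
      · refine Or.inl fun σ hσ => ?_
        rw [key2 σ]
        have h1 := Real.exp_pos (-b * σ); have h2 := Real.exp_pos (-c * σ)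
        exact mul_pos h1 (mul_pos hBp (by linarith))
    · rcases lt_trichotomy r 1 with hr1 | hr1 | hr1
      · -- 0 < r < 1 : switch at σs = -log r / c
        set σs : ℝ := -Real.log r / c with hσsdef
        have hσspos : 0 < σs := by
          have hlog : Real.log r < 0 := Real.log_neg hr0 hr1
          apply div_pos (by linarith) hc
        have hexp : Real.exp (-c * σs) = r := by
          rw [hσsdef, show -c * (-Real.log r / c) = Real.log r by field_simp,
            Real.exp_log hr0]
        apply oneSwitch_aux _ B σs hB0 hσspos.le
        · intro σ hσ hlt
          rw [key2 σ]
          have h1 := Real.exp_pos (-b * σ)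
          have h2 : r < Real.exp (-c * σ) := by
            rw [← hexp]; exact Real.exp_lt_exp.mpr (by nlinarith)
          have heq : B * (Real.exp (-b * σ) * (B * (Real.exp (-c * σ) - r)))
              = Real.exp (-b * σ) * (B ^ 2 * (Real.exp (-c * σ) - r)) := by ring
          rw [heq]
          exact mul_pos h1 (mul_pos hB2 (by linarith))
        · rw [key2 σs, hexp]; ring
        · intro σ hgt
          rw [key2 σ]
          have h1 := Real.exp_pos (-b * σ)
          have h2 : Real.exp (-c * σ) < r := by
            rw [← hexp]; exact Real.exp_lt_exp.mpr (by nlinarith)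
          have heq : B * (Real.exp (-b * σ) * (B * (Real.exp (-c * σ) - r)))
              = Real.exp (-b * σ) * (B ^ 2 * (Real.exp (-c * σ) - r)) := by ring
          rw [heq]
          exact mul_neg_of_pos_of_neg h1 (mul_neg_of_pos_of_neg hB2 (by linarith))
      · -- r = 1 : switch at 0
        apply oneSwitch_aux _ B 0 hB0 le_rfl
        · intro σ hσ hlt; linarith
        · rw [key2 0, hr1]; norm_num
        · intro σ hgt
          rw [key2 σ, hr1]
          have h1 := Real.exp_pos (-b * σ)
          have h2 : Real.exp (-c * σ) < 1 := by
            have := Real.exp_lt_exp.mpr (show -c * σ < 0 by nlinarith)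
            simpa using this
          have heq : B * (Real.exp (-b * σ) * (B * (Real.exp (-c * σ) - 1)))
              = Real.exp (-b * σ) * (B ^ 2 * (Real.exp (-c * σ) - 1)) := by ring
          rw [heq]
          exact mul_neg_of_pos_of_neg h1 (mul_neg_of_pos_of_neg hB2 (by linarith))
      · -- r > 1 : exp(-cσ) - r < 0 always; sign of Δ is sign of -B
        have hle : ∀ σ : ℝ, 0 ≤ σ → Real.exp (-c * σ) ≤ 1 := by
          intro σ hσ
          have := Real.exp_le_exp.mpr (show -c * σ ≤ 0 by nlinarith)
          simpa using this
        rcases hB0.lt_or_gt with hBn | hBp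
        · refine Or.inl fun σ hσ => ?_
          rw [key2 σ]
          have h1 := Real.exp_pos (-b * σ); have h2 := hle σ hσ
          exact mul_pos h1 (mul_pos_of_neg_of_neg hBn (by linarith))
        · refine Or.inr (Or.inl fun σ hσ => ?_)
          rw [key2 σ]
          have h1 := Real.exp_pos (-b * σ); have h2 := hle σ hσ
          exact mul_neg_of_pos_of_neg h1 (mul_neg_of_pos_of_neg hBp (by linarith))
end

section
/- Let D be a discount function. Then D exhibits decreasing impatience (DI) if and only if the function t ↦ ln D(t) is convex on [0,∞); and D exhibits strictly DI if and only if t ↦ ln D(t) is strictly convex on [0,∞). -/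
def DI (D : ℝ → ℝ) : Prop :=
  ∀ t s σ : ℝ, 0 ≤ t → t < s → 0 < σ → D s / D (s + σ) ≤ D t / D (t + σ)

def StrictDI (D : ℝ → ℝ) : Prop :=
  ∀ t s σ : ℝ, 0 ≤ t → t < s → 0 < σ → D s / D (s + σ) < D t / D (t + σ)

open Set Filter Topology Finset

def WrightConvexOn (I : Set ℝ) (f : ℝ → ℝ) : Prop :=
  ∀ ⦃x y h : ℝ⦄, x ∈ I → y + h ∈ I → x < y → 0 < h → f (x + h) - f x ≤ f (y + h) - f y

def StrictWrightConvexOn (I : Set ℝ) (f : ℝ → ℝ) : Prop :=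
  ∀ ⦃x y h : ℝ⦄, x ∈ I → y + h ∈ I → x < y → 0 < h → f (x + h) - f x < f (y + h) - f y

section WrightConvex

variable {I : Set ℝ} {f : ℝ → ℝ}

theorem StrictWrightConvexOn.wrightConvexOn (hf : StrictWrightConvexOn I f) :
    WrightConvexOn I f :=
  fun _ _ _ hx hy hxy hh => (hf hx hy hxy hh).le

theorem ConvexOn.wrightConvexOn (hf : ConvexOn ℝ I f) : WrightConvexOn I f := by
  intro x y h hx hy hxy hh
  have key := (hf.secant_mono_aux2 hx hy (lt_add_of_pos_right x hh) (by linarith)).trans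
    (hf.secant_mono_aux3 hx hy hxy (lt_add_of_pos_right y hh))
  simpa only [add_sub_cancel_left, div_le_div_iff_of_pos_right hh] using key

theorem StrictConvexOn.strictWrightConvexOn (hf : StrictConvexOn ℝ I f) :
    StrictWrightConvexOn I f := by
  intro x y h hx hy hxy hh
  have key := (hf.convexOn.secant_mono_aux2 hx hy (lt_add_of_pos_right x hh)
    (by linarith)).trans_lt (hf.secant_strict_mono_aux3 hx hy hxy (lt_add_of_pos_right y hh))
  simpa only [add_sub_cancel_left, div_lt_div_iff_of_pos_right hh] using key

theorem WrightConvexOn.natCast_mul_sub_le (hf : WrightConvexOn I f) (hI : I.OrdConnected)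
    {a h : ℝ} (hh : 0 < h) (p q : ℕ) (ha : a ∈ I) (hb : a + (p + q) * h ∈ I) :
    q * (f (a + p * h) - f a) ≤ p * (f (a + (p + q) * h) - f (a + p * h)) := by
  set g : ℕ → ℝ := fun k => f (a + k * h + h) - f (a + k * h)
  have hmem (k : ℕ) (hk : k ≤ p + q) : a + k * h ∈ I := by
    refine hI.out ha hb ⟨le_add_of_nonneg_right (by positivity), ?_⟩
    gcongr
    exact_mod_cast hk
  have hg (k j : ℕ) (hk : k < p) (hj : j < q) : g k ≤ g (p + j) := by
    refine hf (hmem k (by omega)) ?_ (by gcongr; exact_mod_cast hk.trans_le le_self_add) hh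
    simpa [add_mul, add_assoc] using hmem (p + j + 1) (by omega)
  have telescope (m n : ℕ) :
      ∑ j ∈ range n, g (m + j) = f (a + (m + n) * h) - f (a + m * h) := by
    induction n with
    | zero => simp
    | succ n ih =>
      rw [sum_range_succ, ih]
      simp only [g]
      push_cast
      ring_nf
  calc q * (f (a + p * h) - f a)
      = ∑ k ∈ range p, ∑ _j ∈ range q, g k := by
        simpa [← mul_sum] using congrArg ((q : ℝ) * ·) (telescope 0 p).symm
    _ ≤ ∑ _k ∈ range p, ∑ j ∈ range q, g (p + j) :=
        sum_le_sum fun k hk => sum_le_sum fun j hj => hg k j (mem_range.1 hk) (mem_range.1 hj)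
    _ = p * (f (a + (p + q) * h) - f (a + p * h)) := by simp [telescope, mul_sub]

theorem WrightConvexOn.sub_le_floor_div_mul_sub (hf : WrightConvexOn I f) (hI : I.OrdConnected)
    (hanti : AntitoneOn f I) {x y z : ℝ} (hx : x ∈ I) (hz : z ∈ I) (hxy : x < y) (hyz : y < z)
    {n : ℕ} (hn : 0 < n) :
    f y - f x ≤ (⌊(y - x) / (z - y) * n⌋₊ / n) * (f z - f y) := by
  set p := ⌊(y - x) / (z - y) * n⌋₊
  set h := (z - y) / n
  have hn' : (0 : ℝ) < n := Nat.cast_pos.2 hn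
  have hzy : 0 < z - y := sub_pos.2 hyz
  have hh : 0 < h := div_pos hzy hn'
  have hph : p * h ≤ y - x := by
    calc p * h ≤ (y - x) / (z - y) * n * h :=
          mul_le_mul_of_nonneg_right (Nat.floor_le (by positivity)) hh.le
      _ = y - x := by simp only [h]; field_simp
  set a := y - p * h
  have hxa : x ≤ a := by linarith
  have ha : a ∈ I := hI.out hx hz ⟨hxa, by linarith [show (0 : ℝ) ≤ p * h by positivity]⟩
  have hay : a + p * h = y := by ring
  have haz : a + (p + n) * h = z := by simp only [a, h]; field_simp; ring
  have key := hf.natCast_mul_sub_le hI hh p n ha (haz ▸ hz)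
  rw [hay, haz] at key
  rw [div_mul_eq_mul_div, le_div_iff₀ hn']
  linarith [mul_le_mul_of_nonneg_left (hanti hx ha hxa) hn'.le]

theorem WrightConvexOn.slope_mono_adjacent (hf : WrightConvexOn I f) (hI : I.OrdConnected)
    (hanti : AntitoneOn f I) {x y z : ℝ} (hx : x ∈ I) (hz : z ∈ I) (hxy : x < y) (hyz : y < z) :
    (f y - f x) / (y - x) ≤ (f z - f y) / (z - y) := by
  have hρ : 0 ≤ (y - x) / (z - y) := div_nonneg (sub_nonneg.2 hxy.le) (sub_nonneg.2 hyz.le)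
  have hlim : Tendsto (fun n : ℕ => (⌊(y - x) / (z - y) * n⌋₊ / n : ℝ) * (f z - f y)) atTop
      (𝓝 ((y - x) / (z - y) * (f z - f y))) :=
    ((tendsto_nat_floor_mul_div_atTop hρ).comp tendsto_natCast_atTop_atTop).mul_const _
  have key := ge_of_tendsto hlim <| eventually_atTop.2
    ⟨1, fun n hn => hf.sub_le_floor_div_mul_sub hI hanti hx hz hxy hyz hn⟩
  rw [div_mul_eq_mul_div, le_div_iff₀ (sub_pos.2 hyz)] at key
  rw [div_le_div_iff₀ (sub_pos.2 hxy) (sub_pos.2 hyz)]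
  linarith

theorem WrightConvexOn.convexOn (hf : WrightConvexOn I f) (hI : I.OrdConnected)
    (hanti : AntitoneOn f I) : ConvexOn ℝ I f :=
  convexOn_of_slope_mono_adjacent hI.convex fun hx hz hxy hyz =>
    hf.slope_mono_adjacent hI hanti hx hz hxy hyz

theorem StrictWrightConvexOn.strictConvexOn (hf : StrictWrightConvexOn I f)
    (hI : I.OrdConnected) (hanti : AntitoneOn f I) : StrictConvexOn ℝ I f := by
  have hconv := hf.wrightConvexOn.convexOn hI hanti
  refine strictConvexOn_of_slope_strict_mono_adjacent hI.convex fun {x y z} hx hz hxy hyz => ?_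
  have hy : y ∈ I := hI.out hx hz ⟨hxy.le, hyz.le⟩
  set h := min (y - x) (z - y) / 2 with h_def
  have hh : 0 < h := half_pos (lt_min (sub_pos.2 hxy) (sub_pos.2 hyz))
  have hxh : x < y - h := by linarith [min_le_left (y - x) (z - y)]
  have hhz : y + h < z := by linarith [min_le_right (y - x) (z - y)]
  have hmid : f (y - h + h) - f (y - h) < f (y + h) - f y :=
    hf (hI.out hx hz ⟨hxh.le, by linarith⟩) (hI.out hx hz ⟨by linarith, hhz.le⟩) (by linarith) hh
  rw [sub_add_cancel] at hmid
  calc (f y - f x) / (y - x) ≤ (f y - f (y - h)) / (y - (y - h)) :=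
        hconv.secant_mono_aux3 hx hy hxh (by linarith)
    _ < (f (y + h) - f y) / (y + h - y) := by
        rw [sub_sub_cancel, add_sub_cancel_left]
        exact div_lt_div_of_pos_right hmid hh
    _ ≤ (f z - f y) / (z - y) := hconv.secant_mono_aux2 hy hz (by linarith) hhz

end WrightConvex

theorem log_sub_log_le_log_sub_log_iff {a b c d : ℝ} (ha : 0 < a) (hb : 0 < b) (hc : 0 < c)
    (hd : 0 < d) : Real.log b - Real.log a ≤ Real.log d - Real.log c ↔ c / d ≤ a / b := by
  rw [← Real.log_le_log_iff (div_pos hc hd) (div_pos ha hb), Real.log_div hc.ne' hd.ne',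
    Real.log_div ha.ne' hb.ne']
  constructor <;> intro h <;> linarith

theorem log_sub_log_lt_log_sub_log_iff {a b c d : ℝ} (ha : 0 < a) (hb : 0 < b) (hc : 0 < c)
    (hd : 0 < d) : Real.log b - Real.log a < Real.log d - Real.log c ↔ c / d < a / b := by
  rw [← Real.log_lt_log_iff (div_pos hc hd) (div_pos ha hb), Real.log_div hc.ne' hd.ne',
    Real.log_div ha.ne' hb.ne']
  constructor <;> intro h <;> linarith

section Discount

variable {D : ℝ → ℝ}

theorem di_iff_wrightConvexOn_log (hpos : ∀ t, 0 ≤ t → 0 < D t) :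
    DI D ↔ WrightConvexOn (Ici 0) (fun t => Real.log (D t)) := by
  have key (t s σ : ℝ) (ht : 0 ≤ t) (hts : t < s) (hσ : 0 < σ) :=
    log_sub_log_le_log_sub_log_iff (hpos t ht) (hpos (t + σ) (by linarith))
      (hpos s (by linarith)) (hpos (s + σ) (by linarith))
  exact ⟨fun hD t s σ ht _ hts hσ => (key t s σ ht hts hσ).2 (hD t s σ ht hts hσ),
    fun hW t s σ ht hts hσ =>
      (key t s σ ht hts hσ).1 (hW ht (show 0 ≤ s + σ by linarith) hts hσ)⟩

theorem strictDI_iff_strictWrightConvexOn_log (hpos : ∀ t, 0 ≤ t → 0 < D t) :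
    StrictDI D ↔ StrictWrightConvexOn (Ici 0) (fun t => Real.log (D t)) := by
  have key (t s σ : ℝ) (ht : 0 ≤ t) (hts : t < s) (hσ : 0 < σ) :=
    log_sub_log_lt_log_sub_log_iff (hpos t ht) (hpos (t + σ) (by linarith))
      (hpos s (by linarith)) (hpos (s + σ) (by linarith))
  exact ⟨fun hD t s σ ht _ hts hσ => (key t s σ ht hts hσ).2 (hD t s σ ht hts hσ),
    fun hW t s σ ht hts hσ =>
      (key t s σ ht hts hσ).1 (hW ht (show 0 ≤ s + σ by linarith) hts hσ)⟩

end Discount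

theorem di_iff_log_convex (D : ℝ → ℝ) (hD : IsDiscount D) :
    (DI D ↔ ConvexOn ℝ (Set.Ici 0) (fun t => Real.log (D t))) ∧
    (StrictDI D ↔ StrictConvexOn ℝ (Set.Ici 0) (fun t => Real.log (D t))) := by
  obtain ⟨-, hpos, hD_anti, -⟩ := hD
  have hlog_anti : AntitoneOn (fun t => Real.log (D t)) (Ici 0) := fun _ hx y hy hxy =>
    Real.log_le_log (hpos y hy) (hD_anti.antitoneOn hx hy hxy)
  exact ⟨(di_iff_wrightConvexOn_log hpos).trans
      ⟨fun h => h.convexOn ordConnected_Ici hlog_anti, ConvexOn.wrightConvexOn⟩,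
    (strictDI_iff_strictWrightConvexOn_log hpos).trans
      ⟨fun h => h.strictConvexOn ordConnected_Ici hlog_anti,
        StrictConvexOn.strictWrightConvexOn⟩⟩
end

section
/- Let D be a discount function. Then D exhibits increasing impatience (II) if and only if the function t ↦ ln D(t) is concave on [0,∞); and D exhibits strictly II if and only if t ↦ ln D(t) is strictly concave on [0,∞). -/
def II (D : ℝ → ℝ) : Prop :=
  ∀ t s σ : ℝ, 0 ≤ t → t < s → 0 < σ → D t / D (t + σ) ≤ D s / D (s + σ)

def StrictII (D : ℝ → ℝ) : Prop :=
  ∀ t s σ : ℝ, 0 ≤ t → t < s → 0 < σ → D t / D (t + σ) < D s / D (s + σ)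

open Finset Filter Topology

def WrightConcaveOn (s : Set ℝ) (f : ℝ → ℝ) : Prop :=
  ∀ ⦃x y h : ℝ⦄, x ∈ s → y + h ∈ s → x < y → 0 < h → f x - f (x + h) ≤ f y - f (y + h)

def StrictWrightConcaveOn (s : Set ℝ) (f : ℝ → ℝ) : Prop :=
  ∀ ⦃x y h : ℝ⦄, x ∈ s → y + h ∈ s → x < y → 0 < h → f x - f (x + h) < f y - f (y + h)

theorem mul_sum_range_le_of_monotoneOn {d : ℕ → ℝ} {k n : ℕ} (hd : MonotoneOn d (Set.Iio n))
    (hkn : k ≤ n) : (n : ℝ) * ∑ i ∈ range k, d i ≤ k * ∑ i ∈ range n, d i := by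
  induction n, hkn using Nat.le_induction with
  | base => exact le_rfl
  | succ m hkm ih =>
    have hsum : ∑ i ∈ range k, d i ≤ k * d m := by
      simpa using Finset.sum_le_card_nsmul (range k) d (d m) fun i hi =>
        have hi : i < k := mem_range.mp hi
        hd (Set.mem_Iio.2 (by omega)) (Set.mem_Iio.2 m.lt_succ_self) (by omega)
    rw [sum_range_succ]
    push_cast
    linear_combination ih (hd.mono (Set.Iio_subset_Iio m.le_succ)) + hsum

theorem exists_swapped_weights {x y h : ℝ} (hxy : x < y) (hh : 0 < h) :
    ∃ a b : ℝ, 0 < a ∧ 0 < b ∧ a + b = 1 ∧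
      a * x + b * (y + h) = y ∧ b * x + a * (y + h) = x + h := by
  have hw : 0 < y + h - x := by linarith
  refine ⟨h / (y + h - x), (y - x) / (y + h - x), by positivity, div_pos (by linarith) hw,
    ?_, ?_, ?_⟩ <;> field_simp <;> ring

section Wright

variable {s : Set ℝ} {f : ℝ → ℝ}

theorem WrightConcaveOn.chord_le_add_nat_mul (hs : Convex ℝ s) (hf : WrightConcaveOn s f)
    {x σ : ℝ} {k n : ℕ} (hx : x ∈ s) (hσ : 0 < σ) (hn : x + n * σ ∈ s) (hkn : k ≤ n) :
    (n - k) * f x + k * f (x + n * σ) ≤ n * f (x + k * σ) := by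
  have hmem : ∀ i : ℕ, i ≤ n → x + i * σ ∈ s := fun i hi =>
    hs.ordConnected.out hx hn ⟨le_add_of_nonneg_right (by positivity), by gcongr⟩
  set F : ℕ → ℝ := fun i => f (x + i * σ)
  have hdrop : MonotoneOn (fun i => F i - F (i + 1)) (Set.Iio n) := by
    refine monotoneOn_of_le_add_one Set.ordConnected_Iio fun i _ _ hi => ?_
    have hi : i + 2 ≤ n := Set.mem_Iio.1 hi
    have e₁ : x + i * σ + σ = x + (i + 1 : ℕ) * σ := by push_cast; ring
    have e₂ : x + (i + 1 : ℕ) * σ + σ = x + (i + 2 : ℕ) * σ := by push_cast; ring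
    have := hf (hmem i (by omega)) (e₂ ▸ hmem (i + 2) hi) (by gcongr; simp) hσ
    rwa [e₁, e₂] at this
  have key := mul_sum_range_le_of_monotoneOn hdrop hkn
  simp only [sum_range_sub', F, Nat.cast_zero, zero_mul, add_zero] at key
  linear_combination key

theorem WrightConcaveOn.chord_le_natCast_div (hs : Convex ℝ s) (hf : WrightConcaveOn s f)
    {x z : ℝ} {k n : ℕ} (hx : x ∈ s) (hz : z ∈ s) (hxz : x < z) (hn : 0 < n) (hkn : k ≤ n) :
    (1 - k / n) * f x + k / n * f z ≤ f (x + k / n * (z - x)) := by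
  have hn' : (0 : ℝ) < n := by exact_mod_cast hn
  have hz' : x + n * ((z - x) / n) = z := by field_simp; ring
  have key := hf.chord_le_add_nat_mul hs hx (div_pos (sub_pos.2 hxz) hn') (by rwa [hz']) hkn
  rw [hz', show x + k * ((z - x) / n) = x + k / n * (z - x) by ring] at key
  refine le_of_mul_le_mul_left ?_ hn'
  calc (n : ℝ) * ((1 - k / n) * f x + k / n * f z) = (n - k) * f x + k * f z := by
        field_simp
    _ ≤ n * f (x + k / n * (z - x)) := key

theorem WrightConcaveOn.concaveOn (hs : Convex ℝ s) (hf : WrightConcaveOn s f)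
    (hanti : AntitoneOn f s) : ConcaveOn ℝ s f := by
  refine LinearOrder.concaveOn_of_lt hs fun x hx z hz hxz a b ha hb hab => ?_
  obtain rfl : a = 1 - b := by linarith
  simp only [smul_eq_mul]
  have hmem : ∀ y, x ≤ y → y ≤ z → y ∈ s := fun y h₁ h₂ => hs.ordConnected.out hx hz ⟨h₁, h₂⟩
  have hdrop : 0 ≤ f x - f z := sub_nonneg.2 (hanti hx hz hxz.le)
  have approx : ∀ n : ℕ, 0 < n →
      (1 - b) * f x + b * f z ≤ f ((1 - b) * x + b * z) + (f x - f z) / n := by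
    intro n hn
    have hn' : (0 : ℝ) < n := by exact_mod_cast hn
    have hkn : ⌈b * n⌉₊ ≤ n := Nat.ceil_le.2 (by nlinarith)
    set q : ℝ := ⌈b * n⌉₊ / n
    have hbq : b ≤ q := by rw [le_div_iff₀ hn']; exact Nat.le_ceil _
    have hqb : q - b ≤ 1 / n := by
      rw [sub_le_iff_le_add', div_le_iff₀ hn', add_mul, one_div_mul_cancel hn'.ne']
      exact (Nat.ceil_lt_add_one (mul_nonneg hb.le hn'.le)).le
    have hq1 : q ≤ 1 := (div_le_one hn').2 (by exact_mod_cast hkn)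
    calc (1 - b) * f x + b * f z = (1 - q) * f x + q * f z + (q - b) * (f x - f z) := by ring
      _ ≤ f (x + q * (z - x)) + 1 / n * (f x - f z) :=
        add_le_add (hf.chord_le_natCast_div hs hx hz hxz hn hkn)
          (mul_le_mul_of_nonneg_right hqb hdrop)
      _ ≤ f ((1 - b) * x + b * z) + (f x - f z) / n := by
        rw [one_div_mul_eq_div]
        gcongr ?_ + _
        refine hanti (hmem _ (by nlinarith) (by nlinarith)) (hmem _ (by nlinarith) (by nlinarith))
          (by nlinarith)
  have hlim : Tendsto (fun n : ℕ => f ((1 - b) * x + b * z) + (f x - f z) / n) atTop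
      (𝓝 (f ((1 - b) * x + b * z))) := by
    simpa using tendsto_const_nhds.add (tendsto_const_div_atTop_nhds_zero_nat (f x - f z))
  exact ge_of_tendsto hlim ((eventually_gt_atTop 0).mono approx)

theorem ConcaveOn.wrightConcaveOn (hf : ConcaveOn ℝ s f) : WrightConcaveOn s f := by
  intro x y h hx hyh hxy hh
  obtain ⟨a, b, ha, hb, hab, hy, hxh⟩ := exists_swapped_weights hxy hh
  have h₁ := hf.2 hx hyh ha.le hb.le hab
  have h₂ := hf.2 hx hyh hb.le ha.le (by rwa [add_comm])
  simp only [smul_eq_mul] at h₁ h₂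
  rw [hy] at h₁
  rw [hxh] at h₂
  linear_combination h₁ + h₂ - (f x + f (y + h)) * hab

theorem StrictConcaveOn.strictWrightConcaveOn (hf : StrictConcaveOn ℝ s f) :
    StrictWrightConcaveOn s f := by
  intro x y h hx hyh hxy hh
  obtain ⟨a, b, ha, hb, hab, hy, hxh⟩ := exists_swapped_weights hxy hh
  have hne : x ≠ y + h := by linarith
  have h₁ := hf.2 hx hyh hne ha hb hab
  have h₂ := hf.2 hx hyh hne hb ha (by rwa [add_comm])
  simp only [smul_eq_mul] at h₁ h₂
  rw [hy] at h₁
  rw [hxh] at h₂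
  linear_combination h₁ + h₂ - (f x + f (y + h)) * hab

theorem StrictWrightConcaveOn.wrightConcaveOn (hf : StrictWrightConcaveOn s f) :
    WrightConcaveOn s f :=
  fun _ _ _ hx hyh hxy hh => (hf hx hyh hxy hh).le

theorem StrictWrightConcaveOn.add_lt_two_mul_midpoint (hf : StrictWrightConcaveOn s f) {x y : ℝ}
    (hx : x ∈ s) (hy : y ∈ s) (hxy : x < y) : f x + f y < 2 * f ((x + y) / 2) := by
  have e₁ : x + (y - x) / 2 = (x + y) / 2 := by ring
  have e₂ : (x + y) / 2 + (y - x) / 2 = y := by ring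
  have := hf (y := (x + y) / 2) (h := (y - x) / 2) hx (by rwa [e₂]) (by linarith) (by linarith)
  rw [e₁, e₂] at this
  linarith

theorem ConcaveOn.strictConcaveOn_of_midpoint (hf : ConcaveOn ℝ s f)
    (hmid : ∀ ⦃x y⦄, x ∈ s → y ∈ s → x < y → f x + f y < 2 * f ((x + y) / 2)) :
    StrictConcaveOn ℝ s f := by
  have hmid' : ∀ ⦃x y⦄, x ∈ s → y ∈ s → x ≠ y → f x + f y < 2 * f ((x + y) / 2) := by
    intro x y hx hy hne
    rcases hne.lt_or_gt with h | h
    · exact hmid hx hy h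
    · rw [add_comm (f x), add_comm x]
      exact hmid hy hx h
  -- For `b ≤ 1/2`, combine `x` with the midpoint; the case `1/2 < b` is symmetric.
  have key : ∀ ⦃x y⦄, x ∈ s → y ∈ s → x ≠ y → ∀ ⦃b⦄, 0 < b → b ≤ 1 / 2 →
      (1 - b) * f x + b * f y < f ((1 - b) * x + b * y) := by
    intro x y hx hy hne b hb hb2
    have hm : (x + y) / 2 ∈ s := by
      convert hf.1 hx hy (show (0 : ℝ) ≤ 1 / 2 by norm_num) (show (0 : ℝ) ≤ 1 / 2 by norm_num)
        (by norm_num) using 1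
      simp only [smul_eq_mul]; ring
    have hconc := hf.2 hx hm (by linarith : 0 ≤ 1 - 2 * b) (by linarith : 0 ≤ 2 * b) (by ring)
    simp only [smul_eq_mul] at hconc
    calc (1 - b) * f x + b * f y = (1 - 2 * b) * f x + b * (f x + f y) := by ring
      _ < (1 - 2 * b) * f x + 2 * b * f ((x + y) / 2) := by
        linarith [mul_lt_mul_of_pos_left (hmid' hx hy hne) hb]
      _ ≤ f ((1 - 2 * b) * x + 2 * b * ((x + y) / 2)) := hconc
      _ = f ((1 - b) * x + b * y) := by ring_nf
  refine ⟨hf.1, fun x hx y hy hne a b ha hb hab => ?_⟩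
  simp only [smul_eq_mul]
  rcases le_or_gt b (1 / 2) with hb2 | hb2
  · obtain rfl : a = 1 - b := by linarith
    exact key hx hy hne hb hb2
  · obtain rfl : b = 1 - a := by linarith
    rw [add_comm (a * f x), add_comm (a * x)]
    exact key hy hx hne.symm ha (by linarith)

end Wright

theorem div_le_div_iff_log_sub_le {a b c d : ℝ} (ha : 0 < a) (hb : 0 < b) (hc : 0 < c)
    (hd : 0 < d) : a / b ≤ c / d ↔ Real.log a - Real.log b ≤ Real.log c - Real.log d := by
  rw [← Real.log_div ha.ne' hb.ne', ← Real.log_div hc.ne' hd.ne',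
    Real.log_le_log_iff (div_pos ha hb) (div_pos hc hd)]

theorem div_lt_div_iff_log_sub_lt {a b c d : ℝ} (ha : 0 < a) (hb : 0 < b) (hc : 0 < c)
    (hd : 0 < d) : a / b < c / d ↔ Real.log a - Real.log b < Real.log c - Real.log d := by
  rw [← Real.log_div ha.ne' hb.ne', ← Real.log_div hc.ne' hd.ne',
    Real.log_lt_log_iff (div_pos ha hb) (div_pos hc hd)]

section Discount

variable {D : ℝ → ℝ}

theorem ii_iff_wrightConcaveOn_log (hpos : ∀ t, 0 ≤ t → 0 < D t) :
    II D ↔ WrightConcaveOn (Set.Ici 0) (fun t => Real.log (D t)) := by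
  have key : ∀ ⦃t s σ⦄, 0 ≤ t → t < s → 0 < σ → (D t / D (t + σ) ≤ D s / D (s + σ) ↔
      Real.log (D t) - Real.log (D (t + σ)) ≤ Real.log (D s) - Real.log (D (s + σ))) :=
    fun t s σ ht hts hσ => div_le_div_iff_log_sub_le (hpos _ ht) (hpos _ (by linarith))
      (hpos _ (by linarith)) (hpos _ (by linarith))
  refine ⟨fun h t s σ ht _ hts hσ => (key ht hts hσ).1 (h t s σ ht hts hσ),
    fun h t s σ ht hts hσ => (key ht hts hσ).2 (h ht ?_ hts hσ)⟩
  simp only [Set.mem_Ici]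
  linarith

theorem strictII_iff_strictWrightConcaveOn_log (hpos : ∀ t, 0 ≤ t → 0 < D t) :
    StrictII D ↔ StrictWrightConcaveOn (Set.Ici 0) (fun t => Real.log (D t)) := by
  have key : ∀ ⦃t s σ⦄, 0 ≤ t → t < s → 0 < σ → (D t / D (t + σ) < D s / D (s + σ) ↔
      Real.log (D t) - Real.log (D (t + σ)) < Real.log (D s) - Real.log (D (s + σ))) :=
    fun t s σ ht hts hσ => div_lt_div_iff_log_sub_lt (hpos _ ht) (hpos _ (by linarith))
      (hpos _ (by linarith)) (hpos _ (by linarith))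
  refine ⟨fun h t s σ ht _ hts hσ => (key ht hts hσ).1 (h t s σ ht hts hσ),
    fun h t s σ ht hts hσ => (key ht hts hσ).2 (h ht ?_ hts hσ)⟩
  simp only [Set.mem_Ici]
  linarith

theorem IsDiscount.antitoneOn_log (hD : IsDiscount D) :
    AntitoneOn (fun t => Real.log (D t)) (Set.Ici 0) :=
  fun _ hx _ hy hxy => Real.log_le_log (hD.2.1 _ hy) (hD.2.2.1.antitoneOn hx hy hxy)

end Discount

theorem ii_iff_log_concave (D : ℝ → ℝ) (hD : IsDiscount D) :
    (II D ↔ ConcaveOn ℝ (Set.Ici 0) (fun t => Real.log (D t))) ∧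
    (StrictII D ↔ StrictConcaveOn ℝ (Set.Ici 0) (fun t => Real.log (D t))) := by
  have hanti := hD.antitoneOn_log
  rw [ii_iff_wrightConcaveOn_log hD.2.1, strictII_iff_strictWrightConcaveOn_log hD.2.1]
  refine ⟨⟨fun h => h.concaveOn (convex_Ici 0) hanti, ConcaveOn.wrightConcaveOn⟩,
    ⟨fun h => ?_, StrictConcaveOn.strictWrightConcaveOn⟩⟩
  exact (h.wrightConcaveOn.concaveOn (convex_Ici 0) hanti).strictConcaveOn_of_midpoint
    fun _ _ hx hy hxy => h.add_lt_two_mul_midpoint hx hy hxy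
end

section
/- Let D be a discount function. Then D exhibits constant impatience, i.e. D(t)/D(t+σ) = D(s)/D(s+σ) for all 0 ≤ t < s and all σ > 0, if and only if there exists r > 0 such that D(t) = e^{−rt} for all t ≥ 0. -/
def ConstImp (D : ℝ → ℝ) : Prop :=
  ∀ t s σ : ℝ, 0 ≤ t → t < s → 0 < σ → D t / D (t + σ) = D s / D (s + σ)

theorem const_impatience_iff_exponential (D : ℝ → ℝ) (hD : IsDiscount D) :
    ConstImp D ↔ ∃ r : ℝ, 0 < r ∧ ∀ t, 0 ≤ t → D t = Real.exp (-r * t) := by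
  obtain ⟨hD0, hpos, hanti, htend⟩ := hD
  constructor
  · intro hci
    -- Step 1: multiplicativity
    have hmul : ∀ t σ : ℝ, 0 ≤ t → 0 ≤ σ → D (t + σ) = D t * D σ := by
      intro t σ ht hσ
      rcases eq_or_lt_of_le hσ with rfl | hσ'
      · simp [hD0]
      rcases eq_or_lt_of_le ht with rfl | ht'
      · simp [hD0]
      have h := hci 0 t σ le_rfl ht' hσ'
      have h1 : 0 < D σ := hpos σ hσ
      have h2 : 0 < D (t + σ) := hpos _ (by linarith)
      have h3 : 0 < D t := hpos t ht
      rw [zero_add, hD0] at h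
      field_simp at h
      nlinarith [h]
    set L : ℝ → ℝ := fun t => Real.log (D t) with hL
    have hLadd : ∀ t σ : ℝ, 0 ≤ t → 0 ≤ σ → L (t + σ) = L t + L σ := by
      intro t σ ht hσ
      simp only [hL, hmul t σ ht hσ]
      exact Real.log_mul (hpos t ht).ne' (hpos σ hσ).ne'
    have hL0 : L 0 = 0 := by simp [hL, hD0]
    have hLanti : ∀ a b : ℝ, 0 ≤ a → a ≤ b → L b ≤ L a := by
      intro a b ha hab
      rcases eq_or_lt_of_le hab with rfl | h
      · exact le_rfl
      exact le_of_lt (Real.log_lt_log (hpos b (le_trans ha hab))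
        (hanti (Set.mem_Ici.mpr ha) (Set.mem_Ici.mpr (le_trans ha hab)) h))
    set c : ℝ := L 1 with hc
    have hcneg : c < 0 := by
      have hD1 : D 1 < 1 := by
        have := hanti (Set.mem_Ici.mpr le_rfl) (Set.mem_Ici.mpr zero_le_one) zero_lt_one
        rwa [hD0] at this
      have : Real.log (D 1) < 0 := Real.log_neg (hpos 1 zero_le_one) hD1
      simpa [hc, hL] using this
    -- L (n * x) = n * L x for naturals
    have hnat : ∀ n : ℕ, ∀ x : ℝ, 0 ≤ x → L (n * x) = n * L x := by
      intro n
      induction n with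
      | zero => intro x hx; simp [hL0]
      | succ k ih =>
        intro x hx
        have : ((k : ℝ) + 1) * x = (k : ℝ) * x + x := by ring
        push_cast
        rw [this, hLadd _ x (by positivity) hx, ih x hx]
        ring
    -- L q = q * c for nonnegative rationals
    have hrat : ∀ q : ℚ, 0 ≤ q → L (q : ℝ) = (q : ℝ) * c := by
      intro q hq
      have hden : (0 : ℝ) < (q.den : ℝ) := by positivity
      have hqnn : (0 : ℝ) ≤ (q : ℝ) := by exact_mod_cast hq
      have h1 : L ((q.den : ℝ) * (q : ℝ)) = (q.den : ℝ) * L (q : ℝ) :=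
        hnat q.den (q : ℝ) hqnn
      have h2 : (q.den : ℝ) * (q : ℝ) = (q.num : ℝ) := by
        rw [mul_comm]
        exact_mod_cast Rat.mul_den_eq_num q
      have hnum : 0 ≤ q.num := Rat.num_nonneg.mpr hq
      obtain ⟨m, hm⟩ := Int.eq_ofNat_of_zero_le hnum
      have h3 : L ((q.num : ℝ)) = (q.num : ℝ) * c := by
        rw [hm]; push_cast
        have := hnat m 1 zero_le_one
        simpa [hc] using this
      have : (q.den : ℝ) * L (q : ℝ) = (q.num : ℝ) * c := by rw [← h1, h2, h3]
      have hq' : (q : ℝ) = (q.num : ℝ) / (q.den : ℝ) := by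
        exact_mod_cast (Rat.num_div_den q).symm
      have h5 : L (q : ℝ) = (q.num : ℝ) * c / (q.den : ℝ) := by
        rw [eq_div_iff hden.ne']; linarith [this]
      rw [h5, hq']; ring
    -- L x = x * c for all nonnegative reals, by squeezing
    have hlin : ∀ x : ℝ, 0 ≤ x → L x = x * c := by
      intro x hx
      by_contra hne
      have hLx_le : L x ≤ 0 := by
        have := hLanti 0 x le_rfl hx
        rwa [hL0] at this
      rcases lt_or_gt_of_ne hne with hlt | hgt
      · -- L x < x * c : pick rational q with x < q < L x / c
        have h1 : x < L x / c := (lt_div_iff_of_neg hcneg).mpr hlt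
        obtain ⟨q, hq1, hq2⟩ := exists_rat_btwn h1
        have hq0 : 0 ≤ q := by
          have : (0:ℝ) ≤ (q:ℝ) := le_of_lt (lt_of_le_of_lt hx hq1)
          exact_mod_cast this
        have ha := hLanti x q hx (le_of_lt hq1)
        rw [hrat q hq0] at ha
        have hb : L x < (q : ℝ) * c := (lt_div_iff_of_neg hcneg).mp hq2
        linarith
      · -- x * c < L x : pick rational p with L x / c < p < x
        have h1 : L x / c < x := (div_lt_iff_of_neg hcneg).mpr hgt
        obtain ⟨p, hp1, hp2⟩ := exists_rat_btwn h1
        have hp0 : 0 ≤ p := by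
          have hLc : 0 ≤ L x / c := div_nonneg_of_nonpos hLx_le (le_of_lt hcneg)
          have : (0:ℝ) ≤ (p:ℝ) := le_of_lt (lt_of_le_of_lt hLc hp1)
          exact_mod_cast this
        have ha := hLanti p x (by exact_mod_cast hp0) (le_of_lt hp2)
        rw [hrat p hp0] at ha
        have hb : (p : ℝ) * c < L x := (div_lt_iff_of_neg hcneg).mp hp1
        linarith
    refine ⟨-c, by linarith, fun t ht => ?_⟩
    have : Real.log (D t) = t * c := hlin t ht
    have hDt : D t = Real.exp (t * c) := by
      rw [← this, Real.exp_log (hpos t ht)]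
    rw [hDt]; ring_nf
  · rintro ⟨r, hr, hexp⟩
    intro t s σ ht hts hσ
    have hs : 0 ≤ s := le_trans ht (le_of_lt hts)
    rw [hexp t ht, hexp s hs, hexp (t + σ) (by linarith), hexp (s + σ) (by linarith),
      ← Real.exp_sub, ← Real.exp_sub]
    ring_nf
end

section
/- Let u be a utility function and D a discount function such that the pair (u, D) exhibits the one-switch property for dated outcomes. Let x̂, ŷ ∈ [0,∞) and t̂, ŝ satisfy 0 < x̂ < ŷ, 0 < t̂ < ŝ and D(t̂)u(x̂) = D(ŝ)u(ŷ). Then one of the following holds: (i) D(t̂+σ)u(x̂) = D(ŝ+σ)u(ŷ) for all σ ≥ −t̂; or (ii) D(t̂+σ)u(x̂) > D(ŝ+σ)u(ŷ) for all σ with −t̂ ≤ σ < 0 and D(t̂+σ)u(x̂) < D(ŝ+σ)u(ŷ) for all σ > 0; or (iii) D(t̂+σ)u(x̂) < D(ŝ+σ)u(ŷ) for all σ with −t̂ ≤ σ < 0 and D(t̂+σ)u(x̂) > D(ŝ+σ)u(ŷ) for all σ > 0. -/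
def IsUtility (u : ℝ → ℝ) : Prop :=
  ContinuousOn u (Set.Ici 0) ∧ StrictMonoOn u (Set.Ici 0) ∧ u 0 = 0

def OneSwitchDated (u D : ℝ → ℝ) : Prop :=
  ∀ x y t s : ℝ, 0 ≤ x → 0 ≤ y → 0 ≤ t → 0 ≤ s →
    OneSwitchSign (fun σ => D (t + σ) * u x - D (s + σ) * u y)

theorem one_switch_dated_both_ways (u D : ℝ → ℝ) (hu : IsUtility u) (hD : IsDiscount D)
    (hOS : OneSwitchDated u D)
    (xh yh th sh : ℝ) (hx : 0 < xh) (hxy : xh < yh) (ht : 0 < th) (hts : th < sh)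
    (hind : D th * u xh = D sh * u yh) :
    (∀ σ, -th ≤ σ → D (th + σ) * u xh = D (sh + σ) * u yh) ∨
    ((∀ σ, -th ≤ σ → σ < 0 → D (sh + σ) * u yh < D (th + σ) * u xh) ∧
     (∀ σ, 0 < σ → D (th + σ) * u xh < D (sh + σ) * u yh)) ∨
    ((∀ σ, -th ≤ σ → σ < 0 → D (th + σ) * u xh < D (sh + σ) * u yh) ∧
     (∀ σ, 0 < σ → D (sh + σ) * u yh < D (th + σ) * u xh)) := by
  have hos := hOS xh yh 0 (sh - th) hx.le (hx.trans hxy).le le_rfl (by linarith)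
  set Δ : ℝ → ℝ := fun σ => D (0 + σ) * u xh - D (sh - th + σ) * u yh with hΔ
  have hval : ∀ σ, Δ (th + σ) = D (th + σ) * u xh - D (sh + σ) * u yh := by
    intro σ
    have e : sh - th + (th + σ) = sh + σ := by ring
    simp only [hΔ, zero_add, e]
  have hth0 : Δ th = 0 := by
    have e : sh - th + th = sh := by ring
    simp only [hΔ, zero_add, e]; linarith
  obtain hP | hN | hZ | ⟨σs, hσs0, hzero, hsame, hdiff⟩ := hos
  · exact absurd (hP th ht.le) (by rw [hth0]; exact lt_irrefl 0)
  · exact absurd (hN th ht.le) (by rw [hth0]; exact lt_irrefl 0)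
  · left
    intro σ hσ
    have h := hZ (th + σ) (by linarith)
    rw [hval σ] at h
    linarith
  · have hσeq : th = σs := (hzero th ht.le).mp hth0
    have h0ne : Δ 0 ≠ 0 := by
      intro h
      have h2 : (0:ℝ) = σs := (hzero 0 le_rfl).mp h
      linarith
    rcases h0ne.lt_or_gt with h0neg | h0pos
    · -- Δ 0 < 0 : case (iii)
      right; right
      constructor
      · intro σ hσ1 hσ2
        have h := hsame (th + σ) 0 (by linarith) le_rfl (Or.inl ⟨by linarith, by linarith⟩)
        have : Δ (th + σ) < 0 := by nlinarith
        rw [hval σ] at this; linarith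
      · intro σ hσ
        have h := hdiff 0 (th + σ) le_rfl (by linarith) (by linarith)
        have : 0 < Δ (th + σ) := by nlinarith
        rw [hval σ] at this; linarith
    · -- Δ 0 > 0 : case (ii)
      right; left
      constructor
      · intro σ hσ1 hσ2
        have h := hsame (th + σ) 0 (by linarith) le_rfl (Or.inl ⟨by linarith, by linarith⟩)
        have : 0 < Δ (th + σ) := by nlinarith
        rw [hval σ] at this; linarith
      · intro σ hσ
        have h := hdiff 0 (th + σ) le_rfl (by linarith) (by linarith)
        have : Δ (th + σ) < 0 := by nlinarith
        rw [hval σ] at this; linarith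
end

section
/- Let r ≥ c > 0 and define D(t) = (1 + ct)·e^{−rt} for t ∈ [0,∞). Then D exhibits strictly increasing impatience: D(t)/D(t+σ) < D(s)/D(s+σ) for all 0 ≤ t < s and all σ > 0. -/
theorem linear_times_exp_strictly_increasing_impatience (r c : ℝ)
    (hc : 0 < c) (hcr : c ≤ r) :
    StrictII (fun t => (1 + c * t) * Real.exp (-r * t)) := by
  intro t s σ ht hts hσ
  have hs : (0:ℝ) ≤ s := le_trans ht hts.le
  have hAt : 0 < 1 + c * (t + σ) := by nlinarith
  have hAs : 0 < 1 + c * (s + σ) := by nlinarith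
  have hDt : 0 < (1 + c * (t + σ)) * Real.exp (-r * (t + σ)) :=
    mul_pos hAt (Real.exp_pos _)
  have hDs : 0 < (1 + c * (s + σ)) * Real.exp (-r * (s + σ)) :=
    mul_pos hAs (Real.exp_pos _)
  simp only
  rw [div_lt_div_iff₀ hDt hDs]
  have hexp : Real.exp (-r * t) * Real.exp (-r * (s + σ)) =
      Real.exp (-r * s) * Real.exp (-r * (t + σ)) := by
    rw [← Real.exp_add, ← Real.exp_add]; ring_nf
  have hpoly : (1 + c * t) * (1 + c * (s + σ)) < (1 + c * s) * (1 + c * (t + σ)) := by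
    nlinarith [mul_pos (mul_pos hc hc) (mul_pos hσ (sub_pos.mpr hts))]
  calc (1 + c * t) * Real.exp (-r * t) * ((1 + c * (s + σ)) * Real.exp (-r * (s + σ)))
      = (1 + c * t) * (1 + c * (s + σ)) * (Real.exp (-r * t) * Real.exp (-r * (s + σ))) := by ring
    _ = (1 + c * t) * (1 + c * (s + σ)) * (Real.exp (-r * s) * Real.exp (-r * (t + σ))) := by rw [hexp]
    _ < (1 + c * s) * (1 + c * (t + σ)) * (Real.exp (-r * s) * Real.exp (-r * (t + σ))) := by
        exact mul_lt_mul_of_pos_right hpoly (mul_pos (Real.exp_pos _) (Real.exp_pos _))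
    _ = (1 + c * s) * Real.exp (-r * s) * ((1 + c * (t + σ)) * Real.exp (-r * (t + σ))) := by ring
end

section
/- Let a, b, c > 0 with a ≤ b/c + 1 and define D(t) = a·e^{−bt} + (1 − a)·e^{−(b+c)t} for t ∈ [0,∞). Then: if 0 < a < 1, D exhibits strictly decreasing impatience, i.e. D(t)/D(t+σ) > D(s)/D(s+σ) for all 0 ≤ t < s and all σ > 0; if a = 1, D exhibits constant impatience, i.e. equality holds for all such t, s, σ; and if 1 < a ≤ b/c + 1, D exhibits strictly increasing impatience, i.e. D(t)/D(t+σ) < D(s)/D(s+σ) for all 0 ≤ t < s and all σ > 0. -/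
theorem sum_of_exponentials_impatience (a b c : ℝ) (ha : 0 < a) (hb : 0 < b) (hc : 0 < c)
    (habc : a ≤ b / c + 1) (D : ℝ → ℝ)
    (hD : ∀ t, D t = a * Real.exp (-b * t) + (1 - a) * Real.exp (-(b + c) * t)) :
    (a < 1 → StrictDI D) ∧ (a = 1 → ConstImp D) ∧ (1 < a → StrictII D) := by
  have h1 : ∀ x : ℝ, Real.exp (-(b + c) * x) = Real.exp (-b * x) * Real.exp (-c * x) := by
    intro x; rw [← Real.exp_add]; congr 1; ring
  have h2 : ∀ x y : ℝ, Real.exp (-b * (x + y)) = Real.exp (-b * x) * Real.exp (-b * y) := by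
    intro x y; rw [← Real.exp_add]; congr 1; ring
  have h3 : ∀ x y : ℝ, Real.exp (-c * (x + y)) = Real.exp (-c * x) * Real.exp (-c * y) := by
    intro x y; rw [← Real.exp_add]; congr 1; ring
  -- positivity of D on [0, ∞)
  have hDpos : ∀ t : ℝ, 0 ≤ t → 0 < D t := by
    intro t ht
    rw [hD]
    have e1 : Real.exp (-(b + c) * t) ≤ Real.exp (-b * t) := by
      apply Real.exp_le_exp.mpr; nlinarith
    have e2 : 0 < Real.exp (-(b + c) * t) := Real.exp_pos _
    nlinarith [mul_nonneg ha.le (sub_nonneg.mpr e1)]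
  -- the key identity
  have key : ∀ t s σ : ℝ,
      D t * D (s + σ) - D s * D (t + σ) =
        a * (1 - a) * (Real.exp (-b * t) * Real.exp (-b * s) * Real.exp (-b * σ)) *
          ((Real.exp (-c * t) - Real.exp (-c * s)) * (1 - Real.exp (-c * σ))) := by
    intro t s σ
    rw [hD t, hD s, hD (s + σ), hD (t + σ)]
    simp only [h1, h2, h3]
    ring
  -- sign facts
  have aux : ∀ t s σ : ℝ, 0 ≤ t → t < s → 0 < σ →
      0 < Real.exp (-b * t) * Real.exp (-b * s) * Real.exp (-b * σ) *
        ((Real.exp (-c * t) - Real.exp (-c * s)) * (1 - Real.exp (-c * σ))) := by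
    intro t s σ ht hts hσ
    have hY : Real.exp (-c * s) < Real.exp (-c * t) := by
      apply Real.exp_lt_exp.mpr; nlinarith
    have hZ : Real.exp (-c * σ) < 1 := by
      rw [Real.exp_lt_one_iff]; nlinarith
    have := mul_pos (mul_pos (Real.exp_pos (-b * t)) (Real.exp_pos (-b * s)))
      (Real.exp_pos (-b * σ))
    nlinarith [mul_pos (sub_pos.mpr hY) (sub_pos.mpr hZ)]
  refine ⟨?_, ?_, ?_⟩
  · intro ha1 t s σ ht hts hσ
    have hk := key t s σ
    have hA := aux t s σ ht hts hσ
    rw [div_lt_div_iff₀ (hDpos _ (by linarith)) (hDpos _ (by linarith))]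
    nlinarith [mul_pos (mul_pos ha (sub_pos.mpr ha1)) hA]
  · intro ha1 t s σ ht hts hσ
    have hk := key t s σ
    rw [div_eq_div_iff (hDpos _ (by linarith)).ne' (hDpos _ (by linarith)).ne']
    rw [ha1] at hk
    nlinarith [hk]
  · intro ha1 t s σ ht hts hσ
    have hk := key t s σ
    have hA := aux t s σ ht hts hσ
    rw [div_lt_div_iff₀ (hDpos _ (by linarith)) (hDpos _ (by linarith))]
    nlinarith [mul_pos (mul_pos ha (sub_pos.mpr ha1)) hA]
end

section
/- Let D be a continuous discount function satisfying the extended one-switch property. Then either there exist a, b, c > 0 with a ≤ b/c + 1 such that D(t) = a·e^{−bt} + (1 − a)·e^{−(b+c)t} for all t ≥ 0, or there exist r ≥ c ≥ 0 with r > 0 such that D(t) = (1 + ct)·e^{−rt} for all t ≥ 0. -/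
/-!
Since a difference function can switch sign only once, a three-term combination of translates
`σ ↦ D (x + σ)` that vanishes at two shifts vanishes identically. Hence either `D` is
multiplicative, or all translates `D (t + ·)` lie in the plane spanned by `D` and one translate
`D (τ + ·)`, with coordinates that are fixed combinations of `D t` and `D (t + h)`. Integrating
this relation over a short window writes `D` as a combination of its own moving averages, so the
continuous `D` is twice differentiable; differentiating in `t` puts `D`, `D'` and `D''` in the
same plane, so `D` solves `f'' = α f' + β f` on `[1, ∞)`. A positive solution cannot oscillate,
so `D` is `A e^{l₁ t} + B e^{l₂ t}` or `(A + C t) e^{l t}`; the relation between `D t`,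
`D (t + 1)` and `D (t + 2)` carries this form down to `[0, ∞)`, and `D 0 = 1`, strict decrease
and decay to `0` fix the signs of the parameters.
-/

open Set Filter Real Topology MeasureTheory intervalIntegral

def shiftComb (a b h : ℝ) (f : ℝ → ℝ) (t : ℝ) : ℝ := a * f t + b * f (t + h)

theorem hasDerivAt_exp_const_mul (k t : ℝ) :
    HasDerivAt (fun u => exp (k * u)) (k * exp (k * t)) t := by
  simpa [mul_comm] using ((hasDerivAt_id t).const_mul k).exp

theorem hasDerivAt_shiftComb {f g : ℝ → ℝ} {t : ℝ} (a b h : ℝ) (h₀ : HasDerivAt f (g t) t)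
    (h₁ : HasDerivAt f (g (t + h)) (t + h)) :
    HasDerivAt (shiftComb a b h f) (shiftComb a b h g t) t :=
  (h₀.const_mul a).add ((h₁.comp_add_const t h).const_mul b)

section LinearODE

variable {f f' : ℝ → ℝ} {a : ℝ}

theorem continuousOn_Ici_of_hasDerivAt (hd : ∀ t, a ≤ t → HasDerivAt f (f' t) t) :
    ContinuousOn f (Ici a) :=
  fun t ht => (hd t ht).continuousAt.continuousWithinAt

theorem monotoneOn_Ici_of_hasDerivAt_nonneg (hd : ∀ t, a ≤ t → HasDerivAt f (f' t) t)
    (hf' : ∀ t, a ≤ t → 0 ≤ f' t) : MonotoneOn f (Ici a) :=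
  monotoneOn_of_hasDerivWithinAt_nonneg (convex_Ici a) (continuousOn_Ici_of_hasDerivAt hd)
    (fun t ht => (hd t (interior_subset ht)).hasDerivWithinAt)
    fun t ht => hf' t (interior_subset ht)

theorem antitoneOn_Ici_of_hasDerivAt_nonpos (hd : ∀ t, a ≤ t → HasDerivAt f (f' t) t)
    (hf' : ∀ t, a ≤ t → f' t ≤ 0) : AntitoneOn f (Ici a) :=
  antitoneOn_of_hasDerivWithinAt_nonpos (convex_Ici a) (continuousOn_Ici_of_hasDerivAt hd)
    (fun t ht => (hd t (interior_subset ht)).hasDerivWithinAt)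
    fun t ht => hf' t (interior_subset ht)

theorem eq_of_hasDerivAt_zero (hd : ∀ t, a ≤ t → HasDerivAt f 0 t) {t : ℝ} (ht : a ≤ t) :
    f t = f a :=
  le_antisymm
    (antitoneOn_Ici_of_hasDerivAt_nonpos (f' := 0) hd (fun _ _ => le_rfl) self_mem_Ici ht ht)
    (monotoneOn_Ici_of_hasDerivAt_nonneg (f' := 0) hd (fun _ _ => le_rfl) self_mem_Ici ht ht)

theorem exists_neg_of_hasDerivAt_le {m : ℝ} (hd : ∀ t, a ≤ t → HasDerivAt f (f' t) t)
    (hm : m < 0) (hf' : ∀ t, a ≤ t → f' t ≤ m) : ∃ t, a ≤ t ∧ f t < 0 := by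
  have hanti : AntitoneOn (fun t => f t - m * t) (Ici a) :=
    antitoneOn_Ici_of_hasDerivAt_nonpos
      (fun t ht => (hd t ht).sub ((hasDerivAt_id t).const_mul m))
      fun t ht => by simpa using hf' t ht
  set T := a + (|f a| + 1) / -m
  have hT : a ≤ T := le_add_of_nonneg_right (div_nonneg (by positivity) (by linarith))
  have hslope : m * (T - a) = -(|f a| + 1) := by simp only [T]; field_simp [hm.ne]; ring
  refine ⟨T, hT, ?_⟩
  have := hanti self_mem_Ici hT hT
  simp only at this
  linarith [le_abs_self (f a)]

theorem exists_eq_mul_exp_of_hasDerivAt {c : ℝ} (hd : ∀ t, a ≤ t → HasDerivAt f (c * f t) t) :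
    ∃ K, ∀ t, a ≤ t → f t = K * exp (c * t) := by
  have hg : ∀ t, a ≤ t → HasDerivAt (fun t => f t * exp (-c * t)) 0 t := fun t ht => by
    refine ((hd t ht).mul (hasDerivAt_exp_const_mul (-c) t)).congr_deriv ?_
    ring
  refine ⟨f a * exp (-c * a), fun t ht => ?_⟩
  rw [← eq_of_hasDerivAt_zero hg ht, mul_assoc, ← exp_add, neg_mul, neg_add_cancel, exp_zero,
    mul_one]

theorem exists_eq_exp_add_exp_of_hasDerivAt {l₁ l₂ C : ℝ} (hne : l₁ ≠ l₂)
    (hd : ∀ t, a ≤ t → HasDerivAt f (l₁ * f t + C * exp (l₂ * t)) t) :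
    ∃ A B, ∀ t, a ≤ t → f t = A * exp (l₁ * t) + B * exp (l₂ * t) := by
  have hsub : l₂ - l₁ ≠ 0 := sub_ne_zero.2 hne.symm
  obtain ⟨A, hA⟩ := exists_eq_mul_exp_of_hasDerivAt (c := l₁)
    (f := fun t => f t - C / (l₂ - l₁) * exp (l₂ * t)) fun t ht => by
      refine ((hd t ht).sub
        ((hasDerivAt_exp_const_mul l₂ t).const_mul (C / (l₂ - l₁)))).congr_deriv ?_
      field_simp
      ring
  exact ⟨A, C / (l₂ - l₁), fun t ht => by linarith [hA t ht]⟩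

theorem exists_eq_affine_mul_exp_of_hasDerivAt {l C : ℝ}
    (hd : ∀ t, a ≤ t → HasDerivAt f (l * f t + C * exp (l * t)) t) :
    ∃ A, ∀ t, a ≤ t → f t = (A + C * t) * exp (l * t) := by
  have he : ∀ t, exp (-l * t) * exp (l * t) = 1 := fun t => by rw [← exp_add]; simp
  have hg : ∀ t, a ≤ t → HasDerivAt (fun t => f t * exp (-l * t) - C * t) 0 t := fun t ht => by
    refine (((hd t ht).mul (hasDerivAt_exp_const_mul (-l) t)).sub
      ((hasDerivAt_id t).const_mul C)).congr_deriv ?_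
    linear_combination C * he t
  refine ⟨f a * exp (-l * a) - C * a, fun t ht => ?_⟩
  rw [← eq_of_hasDerivAt_zero hg ht]
  linear_combination -f t * he t

end LinearODE

/-- Solutions of `f'' = α f' + β f` with real characteristic roots, on `[a, ∞)`. -/
def IsExpPoly2On (a : ℝ) (f : ℝ → ℝ) : Prop :=
  (∃ A B l₁ l₂ : ℝ, l₂ < l₁ ∧ ∀ t, a ≤ t → f t = A * exp (l₁ * t) + B * exp (l₂ * t)) ∨
    ∃ A C l : ℝ, ∀ t, a ≤ t → f t = (A + C * t) * exp (l * t)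

section SecondOrderODE

variable {f f' : ℝ → ℝ} {a α β : ℝ}

theorem isExpPoly2On_of_ode_of_discrim_nonneg (hdisc : 0 ≤ α ^ 2 + 4 * β)
    (hd : ∀ t, a ≤ t → HasDerivAt f (f' t) t)
    (hdd : ∀ t, a ≤ t → HasDerivAt f' (α * f' t + β * f t) t) : IsExpPoly2On a f := by
  obtain ⟨s, hs0, hs⟩ : ∃ s, 0 ≤ s ∧ s ^ 2 = α ^ 2 + 4 * β :=
    ⟨√(α ^ 2 + 4 * β), sqrt_nonneg _, sq_sqrt hdisc⟩
  -- factor `(d/dt - l₂) (d/dt - l₁) f = 0` with roots `l₁, l₂ = (α ± s) / 2`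
  obtain ⟨K, hK⟩ := exists_eq_mul_exp_of_hasDerivAt (c := (α - s) / 2)
    (f := fun t => f' t - (α + s) / 2 * f t) fun t ht =>
      ((hdd t ht).sub ((hd t ht).const_mul ((α + s) / 2))).congr_deriv
        (by linear_combination (-f t / 4) * hs)
  have hf : ∀ t, a ≤ t → HasDerivAt f ((α + s) / 2 * f t + K * exp ((α - s) / 2 * t)) t :=
    fun t ht => (hd t ht).congr_deriv (by linarith [hK t ht])
  rcases hs0.eq_or_lt with rfl | hs0
  · simp only [sub_zero, add_zero] at hf
    obtain ⟨A, hA⟩ := exists_eq_affine_mul_exp_of_hasDerivAt hf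
    exact .inr ⟨A, K, α / 2, hA⟩
  · have hl : (α - s) / 2 < (α + s) / 2 := by linarith
    obtain ⟨A, B, hAB⟩ := exists_eq_exp_add_exp_of_hasDerivAt hl.ne' hf
    exact .inl ⟨A, B, _, _, hl, hAB⟩

theorem false_of_pos_of_hasDerivAt_neg_mul {v w : ℝ → ℝ} {k : ℝ} (hk : 0 < k)
    (hpos : ∀ t, a ≤ t → 0 < v t) (hv : ∀ t, a ≤ t → HasDerivAt v (w t) t)
    (hw : ∀ t, a ≤ t → HasDerivAt w (-k * v t) t) : False := by
  have hw_anti : AntitoneOn w (Ici a) :=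
    antitoneOn_Ici_of_hasDerivAt_nonpos hw fun t ht => by nlinarith [hpos t ht]
  -- a positive concave function cannot decrease
  have hw_nonneg : ∀ t, a ≤ t → 0 ≤ w t := by
    intro t₀ ht₀
    by_contra! hneg
    obtain ⟨T, hT, hvT⟩ := exists_neg_of_hasDerivAt_le (fun t ht => hv t (ht₀.trans ht)) hneg
      fun t ht => hw_anti ht₀ (ht₀.trans ht) ht
    exact (hpos T (ht₀.trans hT)).not_gt hvT
  have hv_ge : ∀ t, a ≤ t → v a ≤ v t := fun t ht =>
    monotoneOn_Ici_of_hasDerivAt_nonneg hv hw_nonneg self_mem_Ici ht ht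
  obtain ⟨T, hT, hwT⟩ := exists_neg_of_hasDerivAt_le hw
    (neg_neg_of_pos (mul_pos hk (hpos a le_rfl))) fun t ht => by nlinarith [hv_ge t ht]
  exact (hw_nonneg T hT).not_gt hwT

theorem false_of_pos_of_ode_of_discrim_neg (hdisc : α ^ 2 + 4 * β < 0)
    (hpos : ∀ t, a ≤ t → 0 < f t) (hd : ∀ t, a ≤ t → HasDerivAt f (f' t) t)
    (hdd : ∀ t, a ≤ t → HasDerivAt f' (α * f' t + β * f t) t) : False := by
  -- `v = f e^{-αt/2}` solves `v'' = -k v` with `k = -(α² + 4β)/4`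
  refine false_of_pos_of_hasDerivAt_neg_mul (k := -(α ^ 2 + 4 * β) / 4)
    (v := fun t => f t * exp (-(α / 2) * t))
    (w := fun t => (f' t - α / 2 * f t) * exp (-(α / 2) * t)) (by linarith)
    (fun t ht => mul_pos (hpos t ht) (exp_pos _)) (fun t ht => ?_) fun t ht => ?_
  · exact ((hd t ht).mul (hasDerivAt_exp_const_mul _ t)).congr_deriv (by ring)
  · exact (((hdd t ht).sub ((hd t ht).const_mul (α / 2))).mul
      (hasDerivAt_exp_const_mul _ t)).congr_deriv (by simp only [Pi.sub_apply]; ring)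

theorem isExpPoly2On_of_ode (hpos : ∀ t, a ≤ t → 0 < f t)
    (hd : ∀ t, a ≤ t → HasDerivAt f (f' t) t)
    (hdd : ∀ t, a ≤ t → HasDerivAt f' (α * f' t + β * f t) t) : IsExpPoly2On a f := by
  rcases lt_or_ge (α ^ 2 + 4 * β) 0 with hdisc | hdisc
  · exact (false_of_pos_of_ode_of_discrim_neg hdisc hpos hd hdd).elim
  · exact isExpPoly2On_of_ode_of_discrim_nonneg hdisc hd hdd

end SecondOrderODE

theorem IsExpPoly2On.of_recurrence {f : ℝ → ℝ} {a b h₁ h₂ u₁ u₂ : ℝ} (hf : IsExpPoly2On a f)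
    (h₁a : a ≤ b + h₁) (h₂a : a ≤ b + h₂)
    (hrec : ∀ t, b ≤ t → f t = u₁ * f (t + h₁) + u₂ * f (t + h₂)) : IsExpPoly2On b f := by
  have hshift : ∀ l h t, exp (l * (t + h)) = exp (l * h) * exp (l * t) := fun l h t => by
    rw [← exp_add]; ring_nf
  rcases hf with ⟨A, B, l₁, l₂, hl, hAB⟩ | ⟨A, C, l, hACl⟩
  · refine .inl ⟨A * (u₁ * exp (l₁ * h₁) + u₂ * exp (l₁ * h₂)),
      B * (u₁ * exp (l₂ * h₁) + u₂ * exp (l₂ * h₂)), l₁, l₂, hl, fun t ht => ?_⟩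
    rw [hrec t ht, hAB _ (by linarith), hAB _ (by linarith), hshift l₁ h₁, hshift l₁ h₂,
      hshift l₂ h₁, hshift l₂ h₂]
    ring
  · refine .inr ⟨u₁ * (A + C * h₁) * exp (l * h₁) + u₂ * (A + C * h₂) * exp (l * h₂),
      C * (u₁ * exp (l * h₁) + u₂ * exp (l * h₂)), l, fun t ht => ?_⟩
    rw [hrec t ht, hACl _ (by linarith), hACl _ (by linarith), hshift l h₁, hshift l h₂]
    ring

section Regularity

variable {D : ℝ → ℝ}

theorem intervalIntegrable_of_continuousOn_Ici {c a b : ℝ} (hcont : ContinuousOn D (Ici c))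
    (ha : c ≤ a) (hb : c ≤ b) : IntervalIntegrable D volume a b :=
  (hcont.mono fun _ hx => (le_inf ha hb).trans hx.1).intervalIntegrable

theorem hasDerivAt_integral_of_continuousOn_Ici {c u : ℝ} (hcont : ContinuousOn D (Ici c))
    (hu : c < u) : HasDerivAt (fun v => ∫ s in c..v, D s) (D u) u :=
  integral_hasDerivAt_right (intervalIntegrable_of_continuousOn_Ici hcont le_rfl hu.le)
    ((hcont.mono Ioi_subset_Ici_self).stronglyMeasurableAtFilter isOpen_Ioi u hu)
    (hcont.continuousAt (Ici_mem_nhds hu))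

theorem tendsto_integral_div_nhdsGT {y : ℝ} (hcont : ContinuousOn D (Ici y)) :
    Tendsto (fun e => (∫ s in y..y + e, D s) / e) (𝓝[>] 0) (𝓝 (D y)) := by
  have hF : HasDerivWithinAt (fun u => ∫ s in y..u, D s) (D y) (Ici y) y :=
    integral_hasDerivWithinAt_right IntervalIntegrable.refl (t := Ioi y)
      ⟨Ioi y, self_mem_nhdsWithin,
        (hcont.mono Ioi_subset_Ici_self).aestronglyMeasurable measurableSet_Ioi⟩
      ((hcont y self_mem_Ici).mono Ioi_subset_Ici_self)
  have hslope := hasDerivWithinAt_iff_tendsto_slope.1 hF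
  rw [Ici_sdiff_left] at hslope
  have hshift : Tendsto (fun e : ℝ => y + e) (𝓝[>] 0) (𝓝[>] y) := by
    have := (Filter.map_add_left_nhdsGT (c := y) (a := (0 : ℝ))).le
    rwa [add_zero] at this
  refine (hslope.comp hshift).congr' ?_
  filter_upwards with e
  simp [slope_def_field]

theorem integral_translate_eq {τ : ℝ} {P Q : ℝ → ℝ} (hcont : ContinuousOn D (Ici 0))
    (hτ : 0 ≤ τ) (hspan : ∀ t σ, 0 ≤ t → 0 ≤ σ → D (t + σ) = P t * D σ + Q t * D (τ + σ))
    {t x ε : ℝ} (ht : 0 ≤ t) (hx : 0 ≤ x) (hε : 0 ≤ ε) :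
    ∫ s in t + x..t + x + ε, D s
      = P t * (∫ s in x..x + ε, D s) + Q t * ∫ s in τ + x..τ + x + ε, D s := by
  have hshift : ∀ c, ∫ s in c + x..c + x + ε, D s = ∫ σ in x..x + ε, D (c + σ) := fun c => by
    rw [integral_comp_add_left, add_assoc]
  have hsub : uIcc x (x + ε) ⊆ Ici 0 := fun σ hσ => by
    rw [uIcc_of_le (by linarith)] at hσ
    exact hx.trans hσ.1
  have hI : IntervalIntegrable D volume x (x + ε) := (hcont.mono hsub).intervalIntegrable
  have hIτ : IntervalIntegrable (fun σ => D (τ + σ)) volume x (x + ε) :=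
    (hcont.comp (continuous_const_add τ).continuousOn
      fun σ hσ => add_nonneg hτ (hsub hσ)).intervalIntegrable
  rw [hshift, hshift τ, ← intervalIntegral.integral_const_mul,
    ← intervalIntegral.integral_const_mul,
    ← integral_add (hI.const_mul _) (hIτ.const_mul _)]
  exact integral_congr fun σ hσ => hspan t σ ht (hsub hσ)

theorem exists_integral_rep_of_mul (hcont : ContinuousOn D (Ici 0))
    (hpos : ∀ t, 0 ≤ t → 0 < D t) (hmul : ∀ t σ, 0 ≤ t → 0 ≤ σ → D (t + σ) = D t * D σ) :
    ∃ c : ℝ, ∀ t, 0 ≤ t → D t = c * ∫ s in t..t + 1, D s := by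
  have hJ : 0 < ∫ s in (0 : ℝ)..1, D s :=
    intervalIntegral_pos_of_pos_on (intervalIntegrable_of_continuousOn_Ici hcont le_rfl zero_le_one)
      (fun x hx => hpos x hx.1.le) one_pos
  refine ⟨(∫ s in (0 : ℝ)..1, D s)⁻¹, fun t ht => ?_⟩
  have h := integral_translate_eq (P := D) (Q := 0) hcont le_rfl
    (fun t σ ht hσ => by simp [hmul t σ ht hσ]) ht le_rfl zero_le_one
  simp only [add_zero, zero_add, Pi.zero_apply, zero_mul] at h
  rw [h]
  field_simp

theorem exists_integral_rep_of_translate_eq {τ h : ℝ} {P Q : ℝ → ℝ}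
    (hcont : ContinuousOn D (Ici 0)) (hD0 : D 0 = 1) (hτ : 0 < τ) (hh : 0 < h)
    (hW : D (τ + h) ≠ D τ * D h)
    (hspan : ∀ t σ, 0 ≤ t → 0 ≤ σ → D (t + σ) = P t * D σ + Q t * D (τ + σ)) :
    ∃ ε c₁ c₂ : ℝ, 0 < ε ∧
      ∀ t, 0 ≤ t → D t = shiftComb c₁ c₂ h (fun u => ∫ s in u..u + ε, D s) t := by
  have hav : ∀ y, 0 ≤ y → Tendsto (fun e => (∫ s in y..y + e, D s) / e) (𝓝[>] 0) (𝓝 (D y)) :=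
    fun y hy => tendsto_integral_div_nhdsGT (hcont.mono (Ici_subset_Ici.2 hy))
  -- the determinant of the window averages tends to that of the point values
  have hlim := ((hav 0 le_rfl).mul (hav (τ + h) (by positivity))).sub
    ((hav τ hτ.le).mul (hav h hh.le))
  rw [hD0, one_mul] at hlim
  obtain ⟨ε, hne, hε⟩ :=
    ((hlim.eventually_ne (sub_ne_zero.2 hW)).and self_mem_nhdsWithin).exists
  simp only [zero_add] at hne
  rw [div_mul_div_comm, div_mul_div_comm, ← sub_div] at hne
  set J := fun x => ∫ s in x..x + ε, D s with hJ
  have hdet : J 0 * J (τ + h) - J τ * J h ≠ 0 := by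
    simpa [hJ] using (div_ne_zero_iff.1 hne).1
  refine ⟨ε, (J (τ + h) - D τ * J h) / (J 0 * J (τ + h) - J τ * J h),
    (D τ * J 0 - J τ) / (J 0 * J (τ + h) - J τ * J h), hε, fun t ht => ?_⟩
  have e₀ := integral_translate_eq hcont hτ.le hspan ht le_rfl hε.le
  have e₁ := integral_translate_eq hcont hτ.le hspan ht hh.le hε.le
  have eD := hspan t 0 ht le_rfl
  simp only [add_zero, hD0, mul_one] at e₀ eD
  simp only [shiftComb]
  rw [e₀, e₁, eD, div_mul_eq_mul_div, div_mul_eq_mul_div, ← add_div, eq_div_iff hdet]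
  ring

theorem hasDerivAt_of_eq_shiftComb_sub {F G g : ℝ → ℝ} {c₁ c₂ h ε t : ℝ} (hh : 0 ≤ h)
    (hε : 0 ≤ ε) (hG : ∀ u, 0 < u → HasDerivAt G (g u) u)
    (hF : ∀ u, 0 ≤ u → F u = shiftComb c₁ c₂ h (fun u => G (u + ε) - G u) u) (ht : 0 < t) :
    HasDerivAt F (shiftComb c₁ c₂ h (fun u => g (u + ε) - g u) t) t := by
  have hdiff : ∀ u, 0 < u → HasDerivAt (fun u => G (u + ε) - G u) (g (u + ε) - g u) u :=
    fun u hu => ((hG _ (by linarith)).comp_add_const u ε).sub (hG u hu)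
  refine (hasDerivAt_shiftComb c₁ c₂ h (hdiff t ht)
    (hdiff _ (by linarith))).congr_of_eventuallyEq ?_
  filter_upwards [Ici_mem_nhds ht] with u hu using hF u hu

theorem exists_hasDerivAt_twice_of_integral_rep {c₁ c₂ h ε : ℝ}
    (hcont : ContinuousOn D (Ici 0)) (hh : 0 ≤ h) (hε : 0 < ε)
    (hrep : ∀ t, 0 ≤ t → D t = shiftComb c₁ c₂ h (fun u => ∫ s in u..u + ε, D s) t) :
    ∃ dD ddD : ℝ → ℝ, (∀ t, 0 < t → HasDerivAt D (dD t) t) ∧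
      ∀ t, 0 < t → HasDerivAt dD (ddD t) t := by
  have hI : ∀ u, 0 ≤ u → ∫ s in u..u + ε, D s = (∫ s in 0..u + ε, D s) - ∫ s in 0..u, D s :=
    fun u hu => (integral_interval_sub_left
      (intervalIntegrable_of_continuousOn_Ici hcont le_rfl (by linarith))
      (intervalIntegrable_of_continuousOn_Ici hcont le_rfl hu)).symm
  have hdD : ∀ t, 0 < t → HasDerivAt D
      (shiftComb c₁ c₂ h (fun u => D (u + ε) - D u) t) t :=
    fun t ht => hasDerivAt_of_eq_shiftComb_sub hh hε.le
      (fun u hu => hasDerivAt_integral_of_continuousOn_Ici hcont hu)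
      (fun u hu => by rw [hrep u hu, shiftComb, shiftComb, hI u hu, hI (u + h) (by linarith)])
      ht
  exact ⟨_, _, hdD, fun t ht => hasDerivAt_of_eq_shiftComb_sub hh hε.le hdD (fun _ _ => rfl) ht⟩

end Regularity

theorem deriv_translate_eq_shiftComb {F dF A B : ℝ → ℝ} {h a₁ a₂ b₁ b₂ : ℝ} (hh : 0 ≤ h)
    (hdF : ∀ t, 0 < t → HasDerivAt F (dF t) t)
    (hF : ∀ t σ, 0 < t → 0 ≤ σ →
      F (t + σ) = shiftComb a₁ a₂ h F t * A σ + shiftComb b₁ b₂ h F t * B σ) :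
    ∀ t σ, 0 < t → 0 ≤ σ →
      dF (t + σ) = shiftComb a₁ a₂ h dF t * A σ + shiftComb b₁ b₂ h dF t * B σ := by
  intro t σ ht hσ
  have hP := hasDerivAt_shiftComb a₁ a₂ h (hdF t ht) (hdF (t + h) (by linarith))
  have hQ := hasDerivAt_shiftComb b₁ b₂ h (hdF t ht) (hdF (t + h) (by linarith))
  refine ((hdF (t + σ) (by linarith)).comp_add_const t σ).unique
    (((hP.mul_const (A σ)).add (hQ.mul_const (B σ))).congr_of_eventuallyEq ?_)
  filter_upwards [Ioi_mem_nhds ht] with u hu using hF u σ hu hσ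

theorem exists_eq_mul_or_exists_eq_comb {p₀ q₀ p₁ q₁ p₂ q₂ : ℝ} (h₀ : p₀ ≠ 0 ∨ q₀ ≠ 0) :
    (∃ l, p₁ = l * p₀ ∧ q₁ = l * q₀) ∨
      ∃ α β, p₂ = α * p₁ + β * p₀ ∧ q₂ = α * q₁ + β * q₀ := by
  by_cases hc : p₁ * q₀ - q₁ * p₀ = 0
  · have hn : p₀ ^ 2 + q₀ ^ 2 ≠ 0 := by rcases h₀ with h | h <;> positivity
    refine .inl ⟨(p₁ * p₀ + q₁ * q₀) / (p₀ ^ 2 + q₀ ^ 2), ?_, ?_⟩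
    · field_simp
      linear_combination q₀ * hc
    · field_simp
      linear_combination -p₀ * hc
  · refine .inr ⟨(p₂ * q₀ - q₂ * p₀) / (p₁ * q₀ - q₁ * p₀),
      (p₁ * q₂ - q₁ * p₂) / (p₁ * q₀ - q₁ * p₀), ?_, ?_⟩ <;>
    · rw [div_mul_eq_mul_div, div_mul_eq_mul_div, ← add_div, eq_div_iff hc]
      ring

theorem exists_secondOrder_ode_of_shift_span {D dD ddD B : ℝ → ℝ} {h a₁ a₂ b₁ b₂ : ℝ}
    (hpos : ∀ t, 0 ≤ t → 0 < D t) (hh : 0 ≤ h)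
    (hdD : ∀ t, 0 < t → HasDerivAt D (dD t) t) (hddD : ∀ t, 0 < t → HasDerivAt dD (ddD t) t)
    (hspan : ∀ t σ, 0 ≤ t → 0 ≤ σ →
      D (t + σ) = shiftComb a₁ a₂ h D t * D σ + shiftComb b₁ b₂ h D t * B σ) :
    ∃ (df : ℝ → ℝ) (α β : ℝ), (∀ t, 1 ≤ t → HasDerivAt D (df t) t) ∧
      ∀ t, 1 ≤ t → HasDerivAt df (α * df t + β * D t) t := by
  have s₀ : ∀ t σ : ℝ, 0 < t → 0 ≤ σ →
      D (t + σ) = shiftComb a₁ a₂ h D t * D σ + shiftComb b₁ b₂ h D t * B σ :=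
    fun t σ ht hσ => hspan t σ ht.le hσ
  have s₁ := deriv_translate_eq_shiftComb hh hdD s₀
  have s₂ := deriv_translate_eq_shiftComb hh hddD s₁
  -- on `[1, ∞)`, `D`, `D'`, `D''` are translates by `1`: combinations of `D (· - 1)`, `B (· - 1)`
  have at₁ : ∀ {F : ℝ → ℝ} {p q : ℝ}, (∀ σ, 0 ≤ σ → F (1 + σ) = p * D σ + q * B σ) →
      ∀ u, 1 ≤ u → F u = p * D (u - 1) + q * B (u - 1) :=
    fun hF u hu => by simpa using hF (u - 1) (by linarith)
  have h₀ : shiftComb a₁ a₂ h D 1 ≠ 0 ∨ shiftComb b₁ b₂ h D 1 ≠ 0 := by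
    by_contra! hz
    have := s₀ 1 0 one_pos le_rfl
    rw [hz.1, hz.2, add_zero] at this
    simpa [this] using hpos 1 zero_le_one
  rcases exists_eq_mul_or_exists_eq_comb (p₁ := shiftComb a₁ a₂ h dD 1)
    (q₁ := shiftComb b₁ b₂ h dD 1) (p₂ := shiftComb a₁ a₂ h ddD 1)
    (q₂ := shiftComb b₁ b₂ h ddD 1) h₀ with ⟨l, hp, hq⟩ | ⟨α, β, hp, hq⟩
  · have hD' : ∀ t, 1 ≤ t → HasDerivAt D (l * D t) t := fun t ht => by
      convert hdD t (by linarith) using 1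
      rw [at₁ (s₁ 1 · one_pos) t ht, at₁ (s₀ 1 · one_pos) t ht, hp, hq]
      ring
    exact ⟨fun t => l * D t, l, 0, hD', fun t ht => by simpa using (hD' t ht).const_mul l⟩
  · refine ⟨dD, α, β, fun t ht => hdD t (by linarith), fun t ht => ?_⟩
    convert hddD t (by linarith) using 1
    rw [at₁ (s₂ 1 · one_pos) t ht, at₁ (s₁ 1 · one_pos) t ht, at₁ (s₀ 1 · one_pos) t ht, hp, hq]
    ring

theorem deriv_nonpos_of_antitoneOn_Ici {D E : ℝ → ℝ} {e : ℝ} (hanti : AntitoneOn D (Ici 0))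
    (hE : ∀ t, 0 ≤ t → D t = E t) (hd : HasDerivAt E e 0) : e ≤ 0 :=
  (hd.hasDerivWithinAt (s := Ici 0)).nonpos_of_antitoneOn
    (accPt_principal_iff_nhdsWithin.2 (by rw [Ici_sdiff_left]; infer_instance))
    fun x hx y hy hxy => by rw [← hE x hx, ← hE y hy]; exact hanti hx hy hxy

namespace IsDiscount

variable {D : ℝ → ℝ}

theorem exists_eq_affine_mul_exp (hD : IsDiscount D) {A C l : ℝ}
    (hform : ∀ t, 0 ≤ t → D t = (A + C * t) * exp (l * t)) :
    ∃ r c : ℝ, 0 ≤ c ∧ c ≤ r ∧ 0 < r ∧ ∀ t, 0 ≤ t → D t = (1 + c * t) * exp (-r * t) := by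
  obtain ⟨hD0, hpos, hanti, -⟩ := hD
  obtain rfl : A = 1 := by simpa [hD0] using (hform 0 le_rfl).symm
  have hC : 0 ≤ C := by
    by_contra! hC
    have h := hpos (-2 / C) (div_nonneg_of_nonpos (by norm_num) hC.le)
    rw [hform _ (div_nonneg_of_nonpos (by norm_num) hC.le),
      show 1 + C * (-2 / C) = -1 by field_simp [hC.ne]; ring] at h
    nlinarith [exp_pos (l * (-2 / C))]
  have hl : l < 0 := by
    have h := hanti self_mem_Ici (mem_Ici.2 zero_le_one) zero_lt_one
    rw [hform 1 zero_le_one, hD0] at h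
    by_contra! hl
    nlinarith [one_le_exp (by linarith : 0 ≤ l * 1)]
  have hslope := deriv_nonpos_of_antitoneOn_Ici hanti.antitoneOn hform
    ((((hasDerivAt_id 0).const_mul C).const_add 1).mul (hasDerivAt_exp_const_mul l 0))
  simp only [id, mul_one, mul_zero, add_zero, exp_zero, one_mul] at hslope
  exact ⟨-l, C, hC, by linarith, by linarith, fun t ht => by rw [hform t ht, neg_neg]⟩

theorem exists_eq_exp_add_exp (hD : IsDiscount D) {A B l₁ l₂ : ℝ} (hl : l₂ < l₁)
    (hA : A ≠ 0) (hform : ∀ t, 0 ≤ t → D t = A * exp (l₁ * t) + B * exp (l₂ * t)) :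
    ∃ a b c : ℝ, 0 < a ∧ 0 < b ∧ 0 < c ∧ a ≤ b / c + 1 ∧
      ∀ t, 0 ≤ t → D t = a * exp (-b * t) + (1 - a) * exp (-(b + c) * t) := by
  obtain ⟨hD0, hpos, hanti, htend⟩ := hD
  have hAB : B = 1 - A := by
    have := hform 0 le_rfl
    simp only [mul_zero, exp_zero, mul_one, hD0] at this
    linarith
  have hlead : Tendsto (fun t => D t * exp (-l₁ * t)) atTop (𝓝 A) := by
    have h := ((tendsto_exp_neg_atTop_nhds_zero.comp
      (tendsto_id.const_mul_atTop (sub_pos.2 hl))).const_mul B).const_add A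
    rw [mul_zero, add_zero] at h
    refine h.congr' ?_
    filter_upwards [eventually_ge_atTop 0] with t ht
    rw [hform t ht, add_mul, mul_assoc, mul_assoc, ← exp_add, ← exp_add]
    simp only [Function.comp, id]
    ring_nf
    simp
  have hApos : 0 < A := by
    refine lt_of_le_of_ne (ge_of_tendsto hlead ?_) hA.symm
    filter_upwards [eventually_ge_atTop 0] with t ht
    exact mul_nonneg (hpos t ht).le (exp_pos _).le
  have hl₁ : l₁ < 0 := by
    by_contra! hl₁
    refine hA (tendsto_nhds_unique hlead
      (tendsto_of_tendsto_of_tendsto_of_le_of_le' tendsto_const_nhds htend ?_ ?_))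
    · filter_upwards [eventually_ge_atTop 0] with t ht
      exact mul_nonneg (hpos t ht).le (exp_pos _).le
    · filter_upwards [eventually_ge_atTop 0] with t ht
      have : exp (-l₁ * t) ≤ 1 := exp_le_one_iff.2 (by nlinarith)
      nlinarith [hpos t ht]
  have hslope := deriv_nonpos_of_antitoneOn_Ici hanti.antitoneOn hform
    (((hasDerivAt_exp_const_mul l₁ 0).const_mul A).add
      ((hasDerivAt_exp_const_mul l₂ 0).const_mul B))
  simp only [mul_zero, exp_zero, mul_one] at hslope
  have hc : 0 < l₁ - l₂ := sub_pos.2 hl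
  refine ⟨A, -l₁, l₁ - l₂, hApos, by linarith, hc, ?_, fun t ht => ?_⟩
  · rw [div_add_one hc.ne', le_div_iff₀ hc]
    nlinarith
  · rw [hform t ht, hAB]
    ring_nf

end IsDiscount

theorem IsExpPoly2On.discount_form {D : ℝ → ℝ} (hD : IsDiscount D) (h : IsExpPoly2On 0 D) :
    (∃ a b c : ℝ, 0 < a ∧ 0 < b ∧ 0 < c ∧ a ≤ b / c + 1 ∧
        ∀ t, 0 ≤ t → D t = a * exp (-b * t) + (1 - a) * exp (-(b + c) * t)) ∨
      ∃ r c : ℝ, 0 ≤ c ∧ c ≤ r ∧ 0 < r ∧ ∀ t, 0 ≤ t → D t = (1 + c * t) * exp (-r * t) := by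
  rcases h with ⟨A, B, l₁, l₂, hl, hform⟩ | ⟨A, C, l, hform⟩
  · rcases eq_or_ne A 0 with rfl | hA
    · exact .inr (hD.exists_eq_affine_mul_exp (A := B) (C := 0) (l := l₂)
        fun t ht => by rw [hform t ht]; ring)
    · exact .inl (hD.exists_eq_exp_add_exp hl hA hform)
  · exact .inr (hD.exists_eq_affine_mul_exp hform)

theorem exists_pos_ne_mul_of_not_mul {D : ℝ → ℝ} (hD0 : D 0 = 1)
    (h : ¬ ∀ t σ, 0 ≤ t → 0 ≤ σ → D (t + σ) = D t * D σ) :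
    ∃ τ σ, 0 < τ ∧ 0 < σ ∧ D (τ + σ) ≠ D τ * D σ := by
  push Not at h
  obtain ⟨τ, σ, hτ, hσ, hne⟩ := h
  refine ⟨τ, σ, hτ.lt_of_ne ?_, hσ.lt_of_ne ?_, hne⟩ <;> rintro rfl <;> simp [hD0] at hne

namespace ExtOneSwitch

variable {D : ℝ → ℝ}

theorem comb_eq_zero_of_two_zeros (hOS : ExtOneSwitch D) {x y z : ℝ} (hx : 0 ≤ x)
    (hxy : x < y) (hyz : y < z) (a b c : ℝ) {σ₁ σ₂ : ℝ} (h₁ : 0 ≤ σ₁) (h₁₂ : σ₁ < σ₂)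
    (e₁ : a * D (x + σ₁) + b * D (y + σ₁) + c * D (z + σ₁) = 0)
    (e₂ : a * D (x + σ₂) + b * D (y + σ₂) + c * D (z + σ₂) = 0) :
    ∀ σ, 0 ≤ σ → a * D (x + σ) + b * D (y + σ) + c * D (z + σ) = 0 := by
  set t : Fin 3 → ℝ := ![x, y, z]
  set w : Fin 3 → ℝ := ![a, b, c]
  have ht : StrictMono t := by
    intro i j hij
    fin_cases i <;> fin_cases j <;> simp [t, Fin.lt_def] at hij ⊢ <;> linarith
  have ht₀ : ∀ i, 0 ≤ t i := by
    intro i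
    fin_cases i <;> simp [t] <;> linarith
  -- the combination is the difference function of the positive and negative parts of `w`
  have hΔ : ∀ σ, diffFn D t t (fun i => max (w i) 0) (fun i => max (-w i) 0) σ
      = a * D (x + σ) + b * D (y + σ) + c * D (z + σ) := by
    intro σ
    simp only [diffFn, Fin.sum_univ_three, t, w, Matrix.cons_val_zero, Matrix.cons_val_one,
      Matrix.cons_val_two, Matrix.head_cons, Matrix.tail_cons]
    linear_combination D (x + σ) * max_zero_sub_max_neg_zero_eq_self a
      + D (y + σ) * max_zero_sub_max_neg_zero_eq_self b
      + D (z + σ) * max_zero_sub_max_neg_zero_eq_self c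
  have h₂ : 0 ≤ σ₂ := h₁.trans h₁₂.le
  rcases hOS 3 3 (by norm_num) (by norm_num) t t _ _ ht ht ht₀ ht₀
      (fun _ => le_max_right _ _) (fun _ => le_max_right _ _) with
    hpos | hneg | hzero | ⟨σs, -, hroot, -⟩
  · exact absurd (hpos σ₁ h₁) (by rw [hΔ, e₁]; exact lt_irrefl 0)
  · exact absurd (hneg σ₁ h₁) (by rw [hΔ, e₁]; exact lt_irrefl 0)
  · exact fun σ hσ => hΔ σ ▸ hzero σ hσ
  · have := (hroot σ₁ h₁).1 (by rw [hΔ, e₁])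
    have := (hroot σ₂ h₂).1 (by rw [hΔ, e₂])
    linarith

variable {τ h : ℝ}

theorem translate_det_ne_zero (hOS : ExtOneSwitch D) (hD0 : D 0 = 1)
    (hpos : ∀ t, 0 ≤ t → 0 < D t) (hτ : 0 < τ) (hh : 0 < h) (hW : D (τ + h) ≠ D τ * D h)
    {x y : ℝ} (hx : 0 ≤ x) (hxy : x < y) :
    D x * D (τ + y) - D y * D (τ + x) ≠ 0 := by
  intro hdet
  have hzero := hOS.comb_eq_zero_of_two_zeros le_rfl hτ (by linarith : τ < τ + h + 1)
    (D (τ + x)) (-D x) 0 hx hxy (by simp only [zero_add]; ring)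
    (by simp only [zero_add]; linear_combination -hdet)
  have e₀ := hzero 0 le_rfl
  have e₁ := hzero h hh.le
  simp only [zero_add, add_zero, hD0] at e₀ e₁
  refine hW (mul_left_cancel₀ (hpos x hx).ne' ?_)
  linear_combination -e₁ + D h * e₀

theorem translate_eq (hOS : ExtOneSwitch D) (hD0 : D 0 = 1) (hτ : 0 < τ) (hh : 0 < h)
    {t σ : ℝ} (ht : 0 ≤ t) (hσ : 0 ≤ σ) :
    (D (τ + h) - D τ * D h) * D (t + σ)
      = (D t * D (τ + h) - D (t + h) * D τ) * D σ + (D (t + h) - D t * D h) * D (τ + σ) := by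
  rcases ht.eq_or_lt with rfl | ht
  · simp only [zero_add, hD0]; ring
  rcases eq_or_ne t τ with rfl | htτ
  · ring
  -- the 2 × 2 minors of the values at the shifts `0` and `h` annihilate every shift
  have hcomb : ∀ x y z, 0 ≤ x → x < y → y < z → ∀ a b c,
      a * D (x + 0) + b * D (y + 0) + c * D (z + 0) = 0 →
      a * D (x + h) + b * D (y + h) + c * D (z + h) = 0 →
      a * D (x + σ) + b * D (y + σ) + c * D (z + σ) = 0 :=
    fun x y z hx hxy hyz a b c e₀ e₁ =>
      hOS.comb_eq_zero_of_two_zeros hx hxy hyz a b c le_rfl hh e₀ e₁ σ hσ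
  rcases htτ.lt_or_gt with htτ | htτ
  · have := hcomb 0 t τ le_rfl ht htτ (D τ * D (t + h) - D (τ + h) * D t)
      (D (τ + h) - D τ * D h) (D t * D h - D (t + h))
      (by simp only [add_zero, hD0]; ring) (by simp only [zero_add]; ring)
    rw [zero_add] at this
    linear_combination this
  · have := hcomb 0 τ t le_rfl hτ htτ (D τ * D (t + h) - D (τ + h) * D t)
      (D t * D h - D (t + h)) (D (τ + h) - D τ * D h)
      (by simp only [add_zero, hD0]; ring) (by simp only [zero_add]; ring)
    rw [zero_add] at this
    linear_combination this

theorem translate_eq_shiftComb (hOS : ExtOneSwitch D) (hD0 : D 0 = 1) (hτ : 0 < τ)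
    (hh : 0 < h) (hW : D (τ + h) ≠ D τ * D h) {t σ : ℝ} (ht : 0 ≤ t) (hσ : 0 ≤ σ) :
    D (t + σ) =
      shiftComb (D (τ + h) / (D (τ + h) - D τ * D h)) (-D τ / (D (τ + h) - D τ * D h)) h D t
          * D σ +
        shiftComb (-D h / (D (τ + h) - D τ * D h)) (D (τ + h) - D τ * D h)⁻¹ h D t
          * D (τ + σ) := by
  have hδ : D (τ + h) - D τ * D h ≠ 0 := sub_ne_zero.2 hW
  simp only [shiftComb]
  field_simp
  linear_combination hOS.translate_eq hD0 hτ hh ht hσ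

theorem exists_backward_recurrence (hOS : ExtOneSwitch D) (hD0 : D 0 = 1)
    (hpos : ∀ t, 0 ≤ t → 0 < D t) :
    ∃ u₁ u₂ : ℝ, ∀ t, 0 ≤ t → D t = u₁ * D (t + 1) + u₂ * D (t + 2) := by
  by_cases hmul : ∀ t σ, 0 ≤ t → 0 ≤ σ → D (t + σ) = D t * D σ
  · refine ⟨(D 1)⁻¹, 0, fun t ht => ?_⟩
    rw [hmul t 1 ht zero_le_one]
    field_simp [(hpos 1 zero_le_one).ne']
    ring
  obtain ⟨τ, h, hτ, hh, hW⟩ := exists_pos_ne_mul_of_not_mul hD0 hmul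
  have hdet := hOS.translate_det_ne_zero hD0 hpos hτ hh hW zero_le_one one_lt_two
  have hδ : D (τ + h) - D τ * D h ≠ 0 := sub_ne_zero.2 hW
  refine ⟨(D (τ + 2) - D τ * D 2) / (D 1 * D (τ + 2) - D 2 * D (τ + 1)),
    (D τ * D 1 - D (τ + 1)) / (D 1 * D (τ + 2) - D 2 * D (τ + 1)), fun t ht => ?_⟩
  have e₀ := hOS.translate_eq hD0 hτ hh ht (le_refl 0)
  have e₁ := hOS.translate_eq hD0 hτ hh ht zero_le_one
  have e₂ := hOS.translate_eq hD0 hτ hh ht zero_le_two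
  simp only [add_zero, hD0] at e₀
  rw [div_mul_eq_mul_div, div_mul_eq_mul_div, ← add_div, eq_div_iff hdet]
  refine mul_left_cancel₀ hδ ?_
  linear_combination (D 1 * D (τ + 2) - D 2 * D (τ + 1)) * e₀
    - (D (τ + 2) - D τ * D 2) * e₁ - (D τ * D 1 - D (τ + 1)) * e₂

theorem exists_shift_span (hOS : ExtOneSwitch D) (hD0 : D 0 = 1) :
    ∃ (B : ℝ → ℝ) (h a₁ a₂ b₁ b₂ : ℝ), 0 ≤ h ∧ ∀ t σ, 0 ≤ t → 0 ≤ σ →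
      D (t + σ) = shiftComb a₁ a₂ h D t * D σ + shiftComb b₁ b₂ h D t * B σ := by
  by_cases hmul : ∀ t σ, 0 ≤ t → 0 ≤ σ → D (t + σ) = D t * D σ
  · exact ⟨D, 0, 1, 0, 0, 0, le_rfl, fun t σ ht hσ => by simp [shiftComb, hmul t σ ht hσ]⟩
  obtain ⟨τ, h, hτ, hh, hW⟩ := exists_pos_ne_mul_of_not_mul hD0 hmul
  exact ⟨fun σ => D (τ + σ), h, _, _, _, _, hh.le,
    fun t σ ht hσ => hOS.translate_eq_shiftComb hD0 hτ hh hW ht hσ⟩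

theorem exists_hasDerivAt_twice (hOS : ExtOneSwitch D)
    (hD0 : D 0 = 1) (hpos : ∀ t, 0 ≤ t → 0 < D t) (hcont : ContinuousOn D (Ici 0)) :
    ∃ dD ddD : ℝ → ℝ, (∀ t, 0 < t → HasDerivAt D (dD t) t) ∧
      ∀ t, 0 < t → HasDerivAt dD (ddD t) t := by
  suffices ∃ ε c₁ c₂ h : ℝ, 0 < ε ∧ 0 ≤ h ∧
      ∀ t, 0 ≤ t → D t = shiftComb c₁ c₂ h (fun u => ∫ s in u..u + ε, D s) t by
    obtain ⟨ε, c₁, c₂, h, hε, hh, hrep⟩ := this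
    exact exists_hasDerivAt_twice_of_integral_rep hcont hh hε hrep
  by_cases hmul : ∀ t σ, 0 ≤ t → 0 ≤ σ → D (t + σ) = D t * D σ
  · obtain ⟨c, hc⟩ := exists_integral_rep_of_mul hcont hpos hmul
    exact ⟨1, c, 0, 0, one_pos, le_rfl, fun t ht => by simp [shiftComb, hc t ht]⟩
  obtain ⟨τ, h, hτ, hh, hW⟩ := exists_pos_ne_mul_of_not_mul hD0 hmul
  obtain ⟨ε, c₁, c₂, hε, hrep⟩ := exists_integral_rep_of_translate_eq hcont hD0 hτ hh hW
    fun t σ ht hσ => hOS.translate_eq_shiftComb hD0 hτ hh hW ht hσ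
  exact ⟨ε, c₁, c₂, h, hε, hh.le, hrep⟩

end ExtOneSwitch

theorem one_switch_discount_representation (D : ℝ → ℝ) (hD : IsDiscount D)
    (hcont : ContinuousOn D (Set.Ici 0)) (hOS : ExtOneSwitch D) :
    ((∃ a b c : ℝ, 0 < a ∧ 0 < b ∧ 0 < c ∧ a ≤ b / c + 1 ∧
        ∀ t, 0 ≤ t → D t = a * Real.exp (-b * t) + (1 - a) * Real.exp (-(b + c) * t)) ∨
     (∃ r c : ℝ, 0 ≤ c ∧ c ≤ r ∧ 0 < r ∧
        ∀ t, 0 ≤ t → D t = (1 + c * t) * Real.exp (-r * t))) := by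
  have hD0 : D 0 = 1 := hD.1
  have hpos : ∀ t, 0 ≤ t → 0 < D t := hD.2.1
  obtain ⟨dD, ddD, hdD, hddD⟩ := hOS.exists_hasDerivAt_twice hD0 hpos hcont
  obtain ⟨B, h, a₁, a₂, b₁, b₂, hh, hspan⟩ := hOS.exists_shift_span hD0
  obtain ⟨df, α, β, hD', hdf'⟩ := exists_secondOrder_ode_of_shift_span hpos hh hdD hddD hspan
  have hexp : IsExpPoly2On 1 D :=
    isExpPoly2On_of_ode (fun t ht => hpos t (by linarith)) hD' hdf'
  obtain ⟨u₁, u₂, hrec⟩ := hOS.exists_backward_recurrence hD0 hpos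
  exact (hexp.of_recurrence (by norm_num) (by norm_num) hrec).discount_form hD
end

section
/- Let D be a discount function satisfying the extended weak one-switch property. Then for every difference function Δ of D and all 0 ≤ σ₁ < σ₂, if Δ(σ₁) = 0 and Δ(σ₂) = 0, then Δ(σ) = 0 for every σ ∈ (σ₁, σ₂). -/
def DoubleSwitch (Δ : ℝ → ℝ) : Prop :=
  ∃ σ₁ σ₂ σ₃ : ℝ, 0 ≤ σ₁ ∧ σ₁ < σ₂ ∧ σ₂ < σ₃ ∧
    ((0 < Δ σ₁ ∧ Δ σ₂ < 0 ∧ 0 < Δ σ₃) ∨ (Δ σ₁ < 0 ∧ 0 < Δ σ₂ ∧ Δ σ₃ < 0))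

def ExtWeakOneSwitch (D : ℝ → ℝ) : Prop :=
  ∀ (n m : ℕ), 0 < n → 0 < m →
    ∀ (t : Fin n → ℝ) (s : Fin m → ℝ) (v : Fin n → ℝ) (w : Fin m → ℝ),
      StrictMono t → StrictMono s → (∀ i, 0 ≤ t i) → (∀ j, 0 ≤ s j) →
      (∀ i, 0 ≤ v i) → (∀ j, 0 ≤ w j) → ¬ DoubleSwitch (diffFn D t s v w)

/-!
If `Δ` were nonzero at some `σ` strictly between two zeros, say `Δ(σ) > 0`, append to the
negative side one more payment of tiny weight `ε` at a time `S` later than all existing ones.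
The new difference function `Δ(·) - ε D(S + ·)` is negative at both zeros and still positive
at `σ`: a double switch. The case `Δ(σ) < 0` follows by exchanging the two sides.
-/

theorem Fin.strictMono_snoc {α : Type*} [Preorder α] {n : ℕ} {f : Fin n → α}
    (hf : StrictMono f) {x : α} (hx : ∀ i, f i < x) :
    StrictMono (Fin.snoc f x : Fin (n + 1) → α) := by
  intro a b hab
  induction b using Fin.lastCases with
  | last =>
    obtain ⟨a, rfl⟩ := Fin.eq_castSucc_of_ne_last hab.ne
    simpa using hx a
  | cast b =>
    obtain ⟨a, rfl⟩ := Fin.eq_castSucc_of_ne_last (hab.trans (Fin.castSucc_lt_last b)).ne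
    simpa using hf (Fin.castSucc_lt_castSucc_iff.mp hab)

theorem Fin.forall_snoc_of_forall {α : Type*} {n : ℕ} {f : Fin n → α} {x : α} {p : α → Prop}
    (hf : ∀ i, p (f i)) (hx : p x) (i : Fin (n + 1)) :
    p ((Fin.snoc f x : Fin (n + 1) → α) i) := by
  induction i using Fin.lastCases with
  | last => simpa using hx
  | cast i => simpa using hf i

theorem exists_nonneg_forall_lt {ι : Type*} [Finite ι] (s : ι → ℝ) :
    ∃ S, 0 ≤ S ∧ ∀ j, s j < S := by
  obtain ⟨B, hB⟩ := (Set.finite_range s).bddAbove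
  exact ⟨max B 0 + 1, by positivity,
    fun j => by linarith [hB (Set.mem_range_self j), le_max_left B 0]⟩

section diffFn

variable {n m : ℕ} (D : ℝ → ℝ) (t : Fin n → ℝ) (s : Fin m → ℝ) (v : Fin n → ℝ) (w : Fin m → ℝ)

theorem diffFn_swap (x : ℝ) : diffFn D s t w v x = -diffFn D t s v w x := by
  simp only [diffFn, neg_sub]

theorem diffFn_snoc_right (S ε x : ℝ) :
    diffFn D t (Fin.snoc s S) v (Fin.snoc w ε) x = diffFn D t s v w x - D (S + x) * ε := by
  simp only [diffFn, Fin.sum_univ_castSucc, Fin.snoc_castSucc, Fin.snoc_last]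
  ring

end diffFn

theorem ExtWeakOneSwitch.diffFn_nonpos_between {D : ℝ → ℝ} (hW : ExtWeakOneSwitch D)
    (hDpos : ∀ t, 0 ≤ t → 0 < D t) {n m : ℕ} (hn : 0 < n)
    {t : Fin n → ℝ} {s : Fin m → ℝ} {v : Fin n → ℝ} {w : Fin m → ℝ}
    (ht : StrictMono t) (hs : StrictMono s) (ht0 : ∀ i, 0 ≤ t i) (hs0 : ∀ j, 0 ≤ s j)
    (hv : ∀ i, 0 ≤ v i) (hw : ∀ j, 0 ≤ w j) {σ₁ σ σ₂ : ℝ} (h1 : 0 ≤ σ₁)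
    (hσ₁ : σ₁ < σ) (hσ₂ : σ < σ₂)
    (hz1 : diffFn D t s v w σ₁ ≤ 0) (hz2 : diffFn D t s v w σ₂ ≤ 0) :
    diffFn D t s v w σ ≤ 0 := by
  by_contra! hpos
  obtain ⟨S, hS0, hsS⟩ := exists_nonneg_forall_lt s
  have hDS : ∀ x, 0 ≤ x → 0 < D (S + x) := fun x hx => hDpos _ (by positivity)
  have hDSσ := hDS σ (by linarith)
  set ε := diffFn D t s v w σ / 2 / D (S + σ)
  have hε : 0 < ε := by positivity
  refine hW n (m + 1) hn m.succ_pos t (Fin.snoc s S) v (Fin.snoc w ε) ht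
    (Fin.strictMono_snoc hs hsS) ht0 (Fin.forall_snoc_of_forall hs0 hS0) hv
    (Fin.forall_snoc_of_forall hw hε.le) ⟨σ₁, σ, σ₂, h1, hσ₁, hσ₂, Or.inr ⟨?_, ?_, ?_⟩⟩
  all_goals rw [diffFn_snoc_right]
  · nlinarith [hDS σ₁ h1]
  · linarith [mul_div_cancel₀ (diffFn D t s v w σ / 2) hDSσ.ne']
  · nlinarith [hDS σ₂ (by linarith)]

theorem weak_one_switch_zero_between_general (D : ℝ → ℝ) (hD : IsDiscount D)
    (hW : ExtWeakOneSwitch D) (n m : ℕ) (hn : 0 < n) (hm : 0 < m)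
    (t : Fin n → ℝ) (s : Fin m → ℝ) (v : Fin n → ℝ) (w : Fin m → ℝ)
    (ht : StrictMono t) (hs : StrictMono s) (ht0 : ∀ i, 0 ≤ t i) (hs0 : ∀ j, 0 ≤ s j)
    (hv : ∀ i, 0 ≤ v i) (hw : ∀ j, 0 ≤ w j)
    (σ₁ σ₂ : ℝ) (h1 : 0 ≤ σ₁)
    (hz1 : diffFn D t s v w σ₁ = 0) (hz2 : diffFn D t s v w σ₂ = 0) :
    ∀ σ, σ₁ < σ → σ < σ₂ → diffFn D t s v w σ = 0 := by
  intro σ hσ₁ hσ₂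
  have hDpos := hD.2.1
  have hle := hW.diffFn_nonpos_between hDpos hn ht hs ht0 hs0 hv hw h1 hσ₁ hσ₂
    hz1.le hz2.le
  have hge := hW.diffFn_nonpos_between hDpos hm hs ht hs0 ht0 hw hv h1 hσ₁ hσ₂
    (by rw [diffFn_swap, hz1, neg_zero]) (by rw [diffFn_swap, hz2, neg_zero])
  rw [diffFn_swap] at hge
  linarith

theorem weak_one_switch_zero_between (D : ℝ → ℝ) (hD : IsDiscount D)
    (hW : ExtWeakOneSwitch D) (n m : ℕ) (hn : 0 < n) (hm : 0 < m)
    (t : Fin n → ℝ) (s : Fin m → ℝ) (v : Fin n → ℝ) (w : Fin m → ℝ)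
    (ht : StrictMono t) (hs : StrictMono s) (ht0 : ∀ i, 0 ≤ t i) (hs0 : ∀ j, 0 ≤ s j)
    (hv : ∀ i, 0 ≤ v i) (hw : ∀ j, 0 ≤ w j)
    (σ₁ σ₂ : ℝ) (h1 : 0 ≤ σ₁) (h12 : σ₁ < σ₂)
    (hz1 : diffFn D t s v w σ₁ = 0) (hz2 : diffFn D t s v w σ₂ = 0) :
    ∀ σ, σ₁ < σ → σ < σ₂ → diffFn D t s v w σ = 0 :=
  weak_one_switch_zero_between_general D hD hW n m hn hm t s v w ht hs ht0 hs0 hv hw σ₁ σ₂ h1 hz1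
    hz2
end

section
/- Let D be a continuous discount function satisfying the extended weak one-switch property. Then for every difference function Δ of D, the set {σ ≥ 0 : Δ(σ) = 0} is a closed interval (possibly empty): it is closed in [0,∞) and contains every point between any two of its points. -/
/-! If `Δ` vanishes at `a < b` but, say, `Δ c < 0` for some `a < c < b`, then adding a small
multiple `ε D(tᵢ + ·)` of one discount term to the positive side makes `Δ` positive at `a` and `b` while
keeping it negative at `c`; this is again a difference function, and it double-switches. The case
`Δ c > 0` is symmetric. Closedness is continuity of `Δ`. -/

theorem doubleSwitch_neg_iff {f : ℝ → ℝ} : DoubleSwitch (fun σ => -f σ) ↔ DoubleSwitch f := by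
  unfold DoubleSwitch
  refine exists₃_congr fun a b c => and_congr_right' <| and_congr_right' <| and_congr_right' ?_
  simp only [neg_pos, neg_lt_zero]
  tauto

theorem exists_doubleSwitch_add_mul {f g : ℝ → ℝ} (hg : ∀ σ, 0 ≤ σ → 0 < g σ) {a b c : ℝ}
    (ha : 0 ≤ a) (hac : a ≤ c) (hcb : c ≤ b) (hfa : f a = 0) (hfb : f b = 0) (hfc : f c < 0) :
    ∃ ε > 0, DoubleSwitch (fun σ => f σ + ε * g σ) := by
  have hc : 0 < g c := hg c (ha.trans hac)
  have hac' : a < c := hac.lt_of_ne (by rintro rfl; linarith)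
  have hcb' : c < b := hcb.lt_of_ne (by rintro rfl; linarith)
  have hε : 0 < -f c / (2 * g c) := div_pos (neg_pos.2 hfc) (by positivity)
  refine ⟨_, hε, a, c, b, ha, hac', hcb', Or.inl ⟨?_, ?_, ?_⟩⟩
  · simpa only [hfa, zero_add] using mul_pos hε (hg a ha)
  · have : -f c / (2 * g c) * g c = -f c / 2 := by field_simp
    show f c + -f c / (2 * g c) * g c < 0
    linarith
  · simpa only [hfb, zero_add] using mul_pos hε (hg b (by linarith))

theorem eq_zero_of_forall_not_doubleSwitch {f g h : ℝ → ℝ} (hg : ∀ σ, 0 ≤ σ → 0 < g σ)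
    (hh : ∀ σ, 0 ≤ σ → 0 < h σ) (hfg : ∀ ε > 0, ¬DoubleSwitch (fun σ => f σ + ε * g σ))
    (hfh : ∀ ε > 0, ¬DoubleSwitch (fun σ => f σ - ε * h σ)) {a b c : ℝ} (ha : 0 ≤ a)
    (hac : a ≤ c) (hcb : c ≤ b) (hfa : f a = 0) (hfb : f b = 0) : f c = 0 := by
  by_contra hfc
  rcases lt_or_gt_of_ne hfc with hneg | hpos
  · obtain ⟨ε, hε, hsw⟩ := exists_doubleSwitch_add_mul hg ha hac hcb hfa hfb hneg
    exact hfg ε hε hsw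
  · obtain ⟨ε, hε, hsw⟩ := exists_doubleSwitch_add_mul (f := fun σ => -f σ) hh ha hac hcb
      (by simp [hfa]) (by simp [hfb]) (neg_lt_zero.2 hpos)
    refine hfh ε hε (doubleSwitch_neg_iff.1 ?_)
    convert hsw using 2
    ring

section diffFn

variable {n m : ℕ} (D : ℝ → ℝ) (t : Fin n → ℝ) (s : Fin m → ℝ) (v : Fin n → ℝ) (w : Fin m → ℝ)

theorem diffFn_add_single_left (i : Fin n) (ε : ℝ) :
    diffFn D t s (v + Pi.single i ε) w = fun σ => diffFn D t s v w σ + ε * D (t i + σ) := by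
  ext σ
  simp only [diffFn, Pi.add_apply, Pi.single_apply, mul_add, mul_ite, mul_zero,
    Finset.sum_add_distrib, Finset.sum_ite_eq', Finset.mem_univ, ↓reduceIte]
  ring

theorem diffFn_add_single_right (j : Fin m) (ε : ℝ) :
    diffFn D t s v (w + Pi.single j ε) = fun σ => diffFn D t s v w σ - ε * D (s j + σ) := by
  ext σ
  simp only [diffFn, Pi.add_apply, Pi.single_apply, mul_add, mul_ite, mul_zero,
    Finset.sum_add_distrib, Finset.sum_ite_eq', Finset.mem_univ, ↓reduceIte]
  ring

variable {D t s}

theorem continuousOn_diffFn (hD : ContinuousOn D (Set.Ici 0)) (ht : ∀ i, 0 ≤ t i)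
    (hs : ∀ j, 0 ≤ s j) : ContinuousOn (diffFn D t s v w) (Set.Ici 0) := by
  have hshift : ∀ τ, 0 ≤ τ → ContinuousOn (fun σ => D (τ + σ)) (Set.Ici 0) := fun τ hτ =>
    hD.comp (continuousOn_const.add continuousOn_id) fun σ hσ => add_nonneg hτ hσ
  exact (continuousOn_finsetSum _ fun i _ => (hshift _ (ht i)).mul continuousOn_const).sub
    (continuousOn_finsetSum _ fun j _ => (hshift _ (hs j)).mul continuousOn_const)

end diffFn

theorem isClosed_setOf_nonneg_and_eq_zero {f : ℝ → ℝ} (hf : ContinuousOn f (Set.Ici 0)) :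
    IsClosed {σ : ℝ | 0 ≤ σ ∧ f σ = 0} :=
  hf.preimage_isClosed_of_isClosed isClosed_Ici isClosed_singleton

theorem weak_one_switch_zero_set_closed_interval (D : ℝ → ℝ) (hD : IsDiscount D)
    (hcont : ContinuousOn D (Set.Ici 0)) (hW : ExtWeakOneSwitch D)
    (n m : ℕ) (hn : 0 < n) (hm : 0 < m)
    (t : Fin n → ℝ) (s : Fin m → ℝ) (v : Fin n → ℝ) (w : Fin m → ℝ)
    (ht : StrictMono t) (hs : StrictMono s) (ht0 : ∀ i, 0 ≤ t i) (hs0 : ∀ j, 0 ≤ s j)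
    (hv : ∀ i, 0 ≤ v i) (hw : ∀ j, 0 ≤ w j) :
    IsClosed {σ : ℝ | 0 ≤ σ ∧ diffFn D t s v w σ = 0} ∧
      ∀ σa σb σc : ℝ,
        σa ∈ {σ : ℝ | 0 ≤ σ ∧ diffFn D t s v w σ = 0} →
        σb ∈ {σ : ℝ | 0 ≤ σ ∧ diffFn D t s v w σ = 0} →
        σa ≤ σc → σc ≤ σb →
        σc ∈ {σ : ℝ | 0 ≤ σ ∧ diffFn D t s v w σ = 0} := by
  refine ⟨isClosed_setOf_nonneg_and_eq_zero (continuousOn_diffFn v w hcont ht0 hs0), ?_⟩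
  rintro σa σb σc ⟨ha, hΔa⟩ ⟨-, hΔb⟩ hac hcb
  let i : Fin n := ⟨0, hn⟩
  let j : Fin m := ⟨0, hm⟩
  have hpos : ∀ τ, 0 ≤ τ → ∀ σ, 0 ≤ σ → 0 < D (τ + σ) := fun τ hτ σ hσ =>
    hD.2.1 _ (add_nonneg hτ hσ)
  refine ⟨ha.trans hac, eq_zero_of_forall_not_doubleSwitch (hpos _ (ht0 i)) (hpos _ (hs0 j))
    ?_ ?_ ha hac hcb hΔa hΔb⟩
  · intro ε hε
    rw [← diffFn_add_single_left]
    exact hW n m hn hm t s _ w ht hs ht0 hs0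
      (fun k => add_nonneg (hv k) (Pi.single_nonneg (α := fun _ => ℝ) |>.2 hε.le k)) hw
  · intro ε hε
    rw [← diffFn_add_single_right]
    exact hW n m hn hm t s v _ ht hs ht0 hs0 hv
      fun k => add_nonneg (hw k) (Pi.single_nonneg (α := fun _ => ℝ) |>.2 hε.le k)
end

section
/- Let D be a continuous discount function satisfying the extended weak one-switch property. Then for every difference function Δ of D, if there exist 0 ≤ σ₁ < σ₂ with Δ(σ₁) = 0 and Δ(σ₂) = 0, then Δ(σ) = 0 for every σ ≥ 0. -/
/-!
Every real combination `∑ c_τ D (τ + ·)` with `τ ≥ 0` is a difference function, so no element of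
the span `V` of the translates of `D` double-switches. As `V` contains `D > 0` and is closed under
translation, this survives small perturbations: a sign pattern `+, -, +` in which the zeros of `F`
are broken by a second element `G ∈ V` makes `F + ε G` double-switch.

If `F ∈ V` vanishes at `σ₁ < σ₂`, perturbing by `D` gives `F = 0` on `[σ₁, σ₂]`. If `F` were
nonzero beyond `σ₂`, no element of `V` vanishing at `σ₁` could be negative at `σ₂`, so evaluation
at `σ₂` is proportional to evaluation at `σ₁` on `V`; applied to translates of `F` this propagates
the zeros in steps of `σ₂ - σ₁`, hence `F = 0` on `[σ₁, ∞)`. Finally, an element of `V` vanishing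
on a tail has constant sign (translate it and perturb by `D`), and if it were positive somewhere, a
combination of two of its translates near the right end `u` of its support, perturbed by the
function itself, would double-switch; continuity of `D` makes the positive values accumulate at `u`.
-/

open Filter Topology Set

theorem eventually_pos_add_mul {a b : ℝ} (h : 0 < a ∨ a = 0 ∧ 0 < b) :
    ∀ᶠ ε in 𝓝[>] (0 : ℝ), 0 < a + ε * b := by
  rcases h with ha | ⟨rfl, hb⟩
  · have hlim : Tendsto (fun ε => a + ε * b) (𝓝 0) (𝓝 a) :=
      (show Continuous fun ε : ℝ => a + ε * b by fun_prop).tendsto' 0 a (by simp)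
    exact (hlim.mono_left nhdsWithin_le_nhds).eventually (lt_mem_nhds ha)
  · filter_upwards [self_mem_nhdsWithin] with ε hε
    simpa using mul_pos hε hb

theorem eventually_add_mul_neg {a b : ℝ} (h : a < 0 ∨ a = 0 ∧ b < 0) :
    ∀ᶠ ε in 𝓝[>] (0 : ℝ), a + ε * b < 0 := by
  have h' : 0 < -a ∨ -a = 0 ∧ 0 < -b := by
    rcases h with ha | ⟨ha, hb⟩
    exacts [.inl (neg_pos.2 ha), .inr ⟨neg_eq_zero.2 ha, neg_pos.2 hb⟩]
  filter_upwards [eventually_pos_add_mul h'] with ε hε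
  linarith

theorem eval_mul_eval_eq_of_nonneg {α : Type*} {V : Submodule ℝ (α → ℝ)} {a b : α}
    (h : ∀ G ∈ V, G a = 0 → 0 ≤ G b) {G E : α → ℝ} (hG : G ∈ V) (hE : E ∈ V) :
    G b * E a = G a * E b := by
  have hH : E a • G - G a • E ∈ V := V.sub_mem (V.smul_mem _ hG) (V.smul_mem _ hE)
  have h₁ := h _ hH (by simp [mul_comm])
  have h₂ := h _ (V.neg_mem hH) (by simp [mul_comm])
  simp only [Pi.neg_apply, Pi.sub_apply, Pi.smul_apply, smul_eq_mul] at h₁ h₂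
  linarith

theorem eq_zero_of_eq_zero_on_Icc_of_add {f : ℝ → ℝ} {a h : ℝ} (hh : 0 < h)
    (hbase : ∀ y ∈ Icc a (a + h), f y = 0) (hstep : ∀ y, a ≤ y → f y = 0 → f (y + h) = 0) :
    ∀ y, a ≤ y → f y = 0 := by
  have hiter (n : ℕ) : ∀ y ∈ Icc a (a + h), f (y + n * h) = 0 := by
    induction n with
    | zero => simpa using hbase
    | succ n ih =>
      intro y hy
      have := hstep _ (by nlinarith [hy.1, n.cast_nonneg (α := ℝ)]) (ih y hy)
      rwa [Nat.cast_succ, add_one_mul, ← add_assoc]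
  intro y hy
  set n := ⌊(y - a) / h⌋₊
  have hn₁ : n * h ≤ y - a := (le_div_iff₀ hh).1 (Nat.floor_le (div_nonneg (by linarith) hh.le))
  have hn₂ : y - a < (n + 1) * h := (div_lt_iff₀ hh).1 (Nat.lt_floor_add_one _)
  simpa using hiter n (y - n * h) ⟨by linarith, by linarith⟩

theorem exists_dense_pos_below {F : ℝ → ℝ} (hcont : ContinuousOn F (Ici 0))
    (hnn : ∀ y, 0 ≤ y → 0 ≤ F y) {σ y₀ : ℝ} (hσ : ∀ y, σ ≤ y → F y = 0) (hy₀ : 0 ≤ y₀)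
    (hFy₀ : 0 < F y₀) :
    ∃ u, 0 < u ∧ (∀ y, u < y → F y = 0) ∧ ∀ ℓ < u, ∃ y, ℓ < y ∧ y < u ∧ 0 < F y := by
  set S := Ioi 0 ∩ F ⁻¹' Ioi 0
  have hS : IsOpen S :=
    (hcont.mono Ioi_subset_Ici_self).isOpen_inter_preimage isOpen_Ioi isOpen_Ioi
  obtain ⟨y₁, hy₁, hy₁y₀⟩ := ((((hcont y₀ hy₀).eventually (lt_mem_nhds hFy₀)).filter_mono
    (nhdsWithin_mono _ (Ioi_subset_Ici hy₀))).and self_mem_nhdsWithin).exists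
  have hy₁S : y₁ ∈ S := ⟨hy₀.trans_lt hy₁y₀, hy₁⟩
  have hbdd : BddAbove S := ⟨σ, fun y hy => le_of_not_gt fun h => by simpa [hσ y h.le] using hy.2⟩
  have hlub := isLUB_csSup ⟨y₁, hy₁S⟩ hbdd
  set u := sSup S
  have hu : u ∉ S := fun hu => by
    obtain ⟨y, hyS, hyu⟩ := ((eventually_nhdsWithin_of_eventually_nhds (hS.mem_nhds hu)).and
      (self_mem_nhdsWithin (s := Ioi u))).exists
    exact (hlub.1 hyS).not_gt hyu
  have hu₀ : 0 < u := hy₁S.1.trans_le (hlub.1 hy₁S)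
  refine ⟨u, hu₀, fun y hy => ?_, fun ℓ hℓ => ?_⟩
  · have hyS : y ∉ S := fun hyS => (hlub.1 hyS).not_gt hy
    exact le_antisymm (not_lt.1 fun h => hyS ⟨hu₀.trans hy, h⟩) (hnn y (hu₀.trans hy).le)
  · obtain ⟨y, hyS, hℓy, hyu⟩ := hlub.exists_between hℓ
    exact ⟨y, hℓy, hyu.lt_of_ne (fun h => hu (h ▸ hyS)), hyS.2⟩

def translateSpan (D : ℝ → ℝ) : Submodule ℝ (ℝ → ℝ) :=
  Submodule.span ℝ ((fun τ x => D (τ + x)) '' Ici 0)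

section translateSpan

variable {D F G : ℝ → ℝ}

theorem translate_mem_translateSpan {τ : ℝ} (hτ : 0 ≤ τ) :
    (fun x => D (τ + x)) ∈ translateSpan D :=
  Submodule.subset_span (mem_image_of_mem _ hτ)

theorem self_mem_translateSpan : D ∈ translateSpan D := by
  simpa using translate_mem_translateSpan (D := D) le_rfl

theorem shift_mem_translateSpan (hF : F ∈ translateSpan D) {a : ℝ} (ha : 0 ≤ a) :
    (fun x => F (a + x)) ∈ translateSpan D := by
  have hle : translateSpan D ≤
      (translateSpan D).comap (LinearMap.funLeft ℝ ℝ (a + ·)) := by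
    refine Submodule.span_le.2 ?_
    rintro _ ⟨τ, hτ, rfl⟩
    simpa [LinearMap.funLeft, Function.comp_def, add_assoc] using
      translate_mem_translateSpan (D := D) (add_nonneg (mem_Ici.1 hτ) ha)
  exact hle hF

theorem continuousOn_of_mem_translateSpan (hcont : ContinuousOn D (Ici 0))
    (hF : F ∈ translateSpan D) : ContinuousOn F (Ici 0) := by
  induction hF using Submodule.span_induction with
  | mem _ h =>
    obtain ⟨τ, hτ, rfl⟩ := h
    exact hcont.comp (by fun_prop) fun x hx => add_nonneg (mem_Ici.1 hτ) (mem_Ici.1 hx)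
  | zero => exact continuousOn_const
  | add _ _ _ _ hF hG => exact hF.add hG
  | smul c _ _ hF => exact continuousOn_const.mul hF

theorem diffFn_mem_translateSpan {n m : ℕ} {t : Fin n → ℝ} {s : Fin m → ℝ}
    (v : Fin n → ℝ) (w : Fin m → ℝ) (ht : ∀ i, 0 ≤ t i) (hs : ∀ j, 0 ≤ s j) :
    diffFn D t s v w ∈ translateSpan D := by
  have hdiff : diffFn D t s v w =
      (∑ i, v i • fun x => D (t i + x)) - ∑ j, w j • fun x => D (s j + x) := by
    funext x
    simp [diffFn, Finset.sum_apply, mul_comm]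
  rw [hdiff]
  exact Submodule.sub_mem _
    (Submodule.sum_mem _ fun i _ => Submodule.smul_mem _ _ (translate_mem_translateSpan (ht i)))
    (Submodule.sum_mem _ fun j _ => Submodule.smul_mem _ _ (translate_mem_translateSpan (hs j)))

theorem ExtWeakOneSwitch.not_doubleSwitch (hW : ExtWeakOneSwitch D)
    (hF : F ∈ translateSpan D) : ¬ DoubleSwitch F := by
  classical
  obtain ⟨l, hl, rfl⟩ := (Finsupp.mem_span_image_iff_linearCombination ℝ).1 hF
  -- `0` is added to the support only to make the list of times nonempty
  set B := insert 0 l.support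
  have hB : ∀ τ ∈ B, 0 ≤ τ := by
    simp only [B, Finset.mem_insert]
    rintro τ (rfl | hτ)
    exacts [le_rfl, hl hτ]
  let t := B.orderEmbOfFin rfl
  have hsum (f : ℝ → ℝ) : ∑ i, f (t i) = ∑ τ ∈ B, f τ := by
    rw [← Finset.sum_coe_sort B]
    exact Fintype.sum_equiv (B.orderIsoOfFin rfl).toEquiv _ _ fun i => rfl
  have hdiff : diffFn D t t (fun i => (l (t i))⁺) (fun i => (l (t i))⁻) =
      Finsupp.linearCombination ℝ (fun τ x => D (τ + x)) l := by
    funext x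
    rw [Finsupp.linearCombination_apply,
      Finsupp.sum_of_support_subset l (Finset.subset_insert 0 _) _ (by simp), Finset.sum_apply]
    simp only [diffFn, ← Finset.sum_sub_distrib, ← mul_sub, posPart_sub_negPart]
    simp only [mul_comm, hsum fun τ => l τ * D (τ + x), Pi.smul_apply, smul_eq_mul, B]
  rw [← hdiff]
  have hcard : 0 < B.card := Finset.card_pos.2 ⟨0, Finset.mem_insert_self _ _⟩
  have ht : ∀ i, 0 ≤ t i := fun i => hB _ (B.orderEmbOfFin_mem rfl i)
  exact hW _ _ hcard hcard t t _ _ t.strictMono t.strictMono ht ht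
    (fun _ => posPart_nonneg _) (fun _ => negPart_nonneg _)

theorem ExtWeakOneSwitch.false_of_signs (hW : ExtWeakOneSwitch D) (hF : F ∈ translateSpan D)
    (hG : G ∈ translateSpan D) {x₁ x₂ x₃ : ℝ} (h₀ : 0 ≤ x₁) (h₁₂ : x₁ < x₂) (h₂₃ : x₂ < x₃)
    (h₁ : 0 < F x₁ ∨ F x₁ = 0 ∧ 0 < G x₁) (h₂ : F x₂ < 0 ∨ F x₂ = 0 ∧ G x₂ < 0)
    (h₃ : 0 < F x₃ ∨ F x₃ = 0 ∧ 0 < G x₃) : False := by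
  obtain ⟨ε, e₁, e₂, e₃⟩ := ((eventually_pos_add_mul h₁).and
    ((eventually_add_mul_neg h₂).and (eventually_pos_add_mul h₃))).exists
  exact hW.not_doubleSwitch (Submodule.add_mem _ hF (Submodule.smul_mem _ ε hG))
    ⟨x₁, x₂, x₃, h₀, h₁₂, h₂₃, .inl ⟨e₁, e₂, e₃⟩⟩

theorem ExtWeakOneSwitch.eq_zero_of_mem_Icc (hW : ExtWeakOneSwitch D)
    (hpos : ∀ x, 0 ≤ x → 0 < D x) (hF : F ∈ translateSpan D) {z₁ z₂ x : ℝ} (hz₁ : 0 ≤ z₁)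
    (hF₁ : F z₁ = 0) (hF₂ : F z₂ = 0) (hx : x ∈ Icc z₁ z₂) : F x = 0 := by
  rcases hx.1.eq_or_lt with rfl | h₁
  · exact hF₁
  rcases hx.2.eq_or_lt with rfl | h₂
  · exact hF₂
  have key : ∀ G ∈ translateSpan D, G z₁ = 0 → G z₂ = 0 → 0 ≤ G x :=
    fun G hG hG₁ hG₂ => not_lt.1 fun hGx => hW.false_of_signs hG self_mem_translateSpan hz₁
      h₁ h₂ (.inr ⟨hG₁, hpos _ hz₁⟩) (.inl hGx) (.inr ⟨hG₂, hpos _ (by linarith)⟩)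
  have hneg := key (-F) (Submodule.neg_mem _ hF) (by simp [hF₁]) (by simp [hF₂])
  exact le_antisymm (by simpa using hneg) (key F hF hF₁ hF₂)

theorem ExtWeakOneSwitch.nonpos_of_two_zeros (hW : ExtWeakOneSwitch D)
    (hpos : ∀ x, 0 ≤ x → 0 < D x) (hF : F ∈ translateSpan D) {σ₁ σ₂ σ₃ : ℝ} (h₀ : 0 ≤ σ₁)
    (h₁₂ : σ₁ < σ₂) (h₂₃ : σ₂ < σ₃) (hF₁ : F σ₁ = 0) (hF₂ : F σ₂ = 0) : F σ₃ ≤ 0 := by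
  by_contra! hF₃
  -- a `G` with `G σ₁ = 0 > G σ₂` would make `F` double-switch after perturbation
  have hsep : ∀ G ∈ translateSpan D, G σ₁ = 0 → 0 ≤ G σ₂ := by
    intro G hG hG₁
    by_contra! hG₂
    obtain ⟨ε, hε, hε₀⟩ := ((eventually_add_mul_neg (.inl hG₂) (b := D σ₂)).and
      self_mem_nhdsWithin).exists
    refine hW.false_of_signs hF (G := G + ε • D)
      (Submodule.add_mem _ hG (Submodule.smul_mem _ _ self_mem_translateSpan)) h₀ h₁₂ h₂₃
      (.inr ⟨hF₁, ?_⟩) (.inr ⟨hF₂, hε⟩) (.inl hF₃)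
    simpa [hG₁] using mul_pos (mem_Ioi.1 hε₀) (hpos _ h₀)
  have hstep : ∀ y, σ₁ ≤ y → F y = 0 → F (y + (σ₂ - σ₁)) = 0 := by
    intro y hy hFy
    have := eval_mul_eval_eq_of_nonneg hsep (shift_mem_translateSpan hF (sub_nonneg.2 hy))
      self_mem_translateSpan
    simp only [sub_add_cancel, hFy, zero_mul] at this
    rw [show y + (σ₂ - σ₁) = y - σ₁ + σ₂ by ring]
    exact (mul_eq_zero.1 this).resolve_right (hpos _ h₀).ne'
  have hmid : ∀ y ∈ Icc σ₁ (σ₁ + (σ₂ - σ₁)), F y = 0 := fun y hy =>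
    hW.eq_zero_of_mem_Icc hpos hF h₀ hF₁ hF₂ (by rwa [add_sub_cancel] at hy)
  have := eq_zero_of_eq_zero_on_Icc_of_add (sub_pos.2 h₁₂) hmid hstep σ₃ (by linarith)
  linarith

theorem ExtWeakOneSwitch.eq_zero_of_two_zeros (hW : ExtWeakOneSwitch D)
    (hpos : ∀ x, 0 ≤ x → 0 < D x) (hF : F ∈ translateSpan D) {σ₁ σ₂ : ℝ} (h₀ : 0 ≤ σ₁)
    (h₁₂ : σ₁ < σ₂) (hF₁ : F σ₁ = 0) (hF₂ : F σ₂ = 0) : ∀ y, σ₁ ≤ y → F y = 0 := by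
  intro y hy
  rcases le_or_gt y σ₂ with h | h
  · exact hW.eq_zero_of_mem_Icc hpos hF h₀ hF₁ hF₂ ⟨hy, h⟩
  · have hneg := hW.nonpos_of_two_zeros hpos (Submodule.neg_mem _ hF) h₀ h₁₂ h
      (by simp [hF₁]) (by simp [hF₂])
    exact le_antisymm (hW.nonpos_of_two_zeros hpos hF h₀ h₁₂ h hF₁ hF₂) (by simpa using hneg)

theorem ExtWeakOneSwitch.nonneg_of_pos (hW : ExtWeakOneSwitch D)
    (hpos : ∀ x, 0 ≤ x → 0 < D x) (hF : F ∈ translateSpan D) {σ y₀ z : ℝ}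
    (hσ : ∀ y, σ ≤ y → F y = 0) (hy₀ : 0 ≤ y₀) (hFy₀ : 0 < F y₀) (hz : 0 ≤ z) : 0 ≤ F z := by
  -- translating `G` by `α` gives the pattern `+, -, 0`, and perturbing by `D` fixes the `0`
  have key : ∀ G ∈ translateSpan D, (∀ y, σ ≤ y → G y = 0) →
      ∀ α β, 0 ≤ α → α < β → 0 < G α → G β < 0 → False := by
    intro G hG hGσ α β hα hαβ hGα hGβ
    refine hW.false_of_signs (shift_mem_translateSpan hG hα) self_mem_translateSpan le_rfl
      (sub_pos.2 hαβ) (x₃ := max σ β + 1) (by linarith [le_max_right σ β])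
      (.inl (by simpa using hGα)) (.inl (by simpa using hGβ))
      (.inr ⟨hGσ _ (by linarith [le_max_left σ β]), hpos _ (by linarith [le_max_right σ β])⟩)
  by_contra! hFz
  have hne : z ≠ y₀ := by rintro rfl; linarith
  rcases lt_or_gt_of_ne hne with h | h
  · exact key (-F) (Submodule.neg_mem _ hF) (fun y hy => by simp [hσ y hy]) z y₀ hz h
      (by simpa using hFz) (by simpa using hFy₀)
  · exact key F hF hσ y₀ z hy₀ h hFy₀ hFz

theorem ExtWeakOneSwitch.false_of_dense_pos_below (hW : ExtWeakOneSwitch D)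
    (hF : F ∈ translateSpan D) {u : ℝ} (hu : 0 < u) (hzero : ∀ y, u < y → F y = 0)
    (hdense : ∀ ℓ < u, ∃ y, ℓ < y ∧ y < u ∧ 0 < F y) : False := by
  obtain ⟨p, hp₀, hpu, hFp⟩ := hdense 0 hu
  obtain ⟨q, hq₀, hqp⟩ : ∃ q, 0 < q ∧ q < p := ⟨p / 2, by positivity, by linarith⟩
  obtain ⟨y, hy, hyu, hFy⟩ := hdense (u - (p - q)) (by linarith)
  obtain ⟨x₃, hx₃, hx₃u, hFx₃⟩ := hdense (u - q) (by linarith)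
  obtain ⟨c, hc, hc₀⟩ :=
    ((eventually_pos_add_mul (b := -F q) (.inl hFp)).and self_mem_nhdsWithin).exists
  -- `F (p + ·) - c F (q + ·)` has signs `+, -, 0` at `0, y - q, x₃`; perturb by `F` to fix the `0`
  refine hW.false_of_signs (F := (fun x => F (p + x)) - c • fun x => F (q + x)) (G := F)
    (Submodule.sub_mem _ (shift_mem_translateSpan hF hp₀.le)
      (Submodule.smul_mem _ c (shift_mem_translateSpan hF hq₀.le)))
    hF le_rfl (x₂ := y - q) (by linarith) (by linarith) (.inl ?_) (.inl ?_) (.inr ⟨?_, hFx₃⟩)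
  · simpa [mul_comm c] using hc
  · have hcFy : 0 < c * F y := mul_pos (mem_Ioi.1 hc₀) hFy
    simpa [hzero (p + (y - q)) (by linarith)] using hcFy
  · simp [hzero (p + x₃) (by linarith), hzero (q + x₃) (by linarith)]

theorem ExtWeakOneSwitch.eq_zero_of_eq_zero_on_Ici (hW : ExtWeakOneSwitch D)
    (hpos : ∀ x, 0 ≤ x → 0 < D x) (hcont : ContinuousOn D (Ici 0)) (hF : F ∈ translateSpan D)
    {σ : ℝ} (hσ : ∀ y, σ ≤ y → F y = 0) : ∀ y, 0 ≤ y → F y = 0 := by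
  have key : ∀ G ∈ translateSpan D, (∀ y, σ ≤ y → G y = 0) → ∀ y, 0 ≤ y → G y ≤ 0 := by
    intro G hG hGσ y hy
    by_contra! hGy
    obtain ⟨u, hu, hzero, hdense⟩ := exists_dense_pos_below
      (continuousOn_of_mem_translateSpan hcont hG)
      (fun z hz => hW.nonneg_of_pos hpos hG hGσ hy hGy hz) hGσ hy hGy
    exact hW.false_of_dense_pos_below hG hu hzero hdense
  intro y hy
  have hneg := key (-F) (Submodule.neg_mem _ hF) (fun z hz => by simp [hσ z hz]) y hy
  exact le_antisymm (key F hF hσ y hy) (by simpa using hneg)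

end translateSpan

theorem weak_one_switch_two_zeros_everywhere_zero_general (D : ℝ → ℝ) (hD : IsDiscount D)
    (hcont : ContinuousOn D (Set.Ici 0)) (hW : ExtWeakOneSwitch D)
    (n m : ℕ)
    (t : Fin n → ℝ) (s : Fin m → ℝ) (v : Fin n → ℝ) (w : Fin m → ℝ)
    (ht0 : ∀ i, 0 ≤ t i) (hs0 : ∀ j, 0 ≤ s j)
    (σ₁ σ₂ : ℝ) (h1 : 0 ≤ σ₁) (h12 : σ₁ < σ₂)
    (hz1 : diffFn D t s v w σ₁ = 0) (hz2 : diffFn D t s v w σ₂ = 0) :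
    ∀ σ, 0 ≤ σ → diffFn D t s v w σ = 0 := by
  obtain ⟨-, hpos, -, -⟩ := hD
  have hF : diffFn D t s v w ∈ translateSpan D := diffFn_mem_translateSpan v w ht0 hs0
  exact hW.eq_zero_of_eq_zero_on_Ici hpos hcont hF (hW.eq_zero_of_two_zeros hpos hF h1 h12 hz1 hz2)

theorem weak_one_switch_two_zeros_everywhere_zero (D : ℝ → ℝ) (hD : IsDiscount D)
    (hcont : ContinuousOn D (Set.Ici 0)) (hW : ExtWeakOneSwitch D)
    (n m : ℕ) (hn : 0 < n) (hm : 0 < m)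
    (t : Fin n → ℝ) (s : Fin m → ℝ) (v : Fin n → ℝ) (w : Fin m → ℝ)
    (ht : StrictMono t) (hs : StrictMono s) (ht0 : ∀ i, 0 ≤ t i) (hs0 : ∀ j, 0 ≤ s j)
    (hv : ∀ i, 0 ≤ v i) (hw : ∀ j, 0 ≤ w j)
    (σ₁ σ₂ : ℝ) (h1 : 0 ≤ σ₁) (h12 : σ₁ < σ₂)
    (hz1 : diffFn D t s v w σ₁ = 0) (hz2 : diffFn D t s v w σ₂ = 0) :
    ∀ σ, 0 ≤ σ → diffFn D t s v w σ = 0 :=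
  weak_one_switch_two_zeros_everywhere_zero_general D hD hcont hW n m t s v w ht0 hs0 σ₁ σ₂ h1 h12
    hz1 hz2
end

section
/- Let D be a continuous discount function. Then D satisfies the extended one-switch property if and only if D satisfies the extended weak one-switch property. -/
/-!
A double switch violates the one-switch sign condition. Conversely, the difference functions of
`D` span the space of finite signed combinations of the shifts `σ ↦ D (x + σ)`, `x ≥ 0`; every
element of this space is itself a difference function, the space contains `D` and is closed under
shifts `f ↦ f (· + c)`. If nothing in it double-switches, perturbing by small multiples of `D`
also rules out weak sign patterns such as `0, +, 0` and `+, 0, +`; with the intermediate value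
theorem this settles functions with at most one zero. A function `f` with two zeros is excluded
with shifts: unless `f` vanishes identically, `f` combined with a suitable `f (· + c)` switches
twice.
-/

open Filter Topology Set

theorem IsPreconnected.forall_pos_or_forall_neg {X : Type*} [TopologicalSpace X] {s : Set X}
    {f : X → ℝ} (hs : IsPreconnected s) (hf : ContinuousOn f s) (h0 : ∀ x ∈ s, f x ≠ 0) :
    (∀ x ∈ s, 0 < f x) ∨ (∀ x ∈ s, f x < 0) := by
  by_contra! ⟨⟨a, ha, hfa⟩, ⟨b, hb, hfb⟩⟩
  obtain ⟨x, hx, hfx⟩ := hs.intermediate_value ha hb hf ⟨hfa, hfb⟩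
  exact h0 x hx hfx

theorem eventually_pos_sub_mul {a : ℝ} (ha : 0 < a) (b : ℝ) :
    ∀ᶠ ε in 𝓝[>] (0 : ℝ), 0 < ε ∧ 0 < a - ε * b := by
  have hlim : Tendsto (fun ε => a - ε * b) (𝓝[>] 0) (𝓝 a) := by
    have : Continuous fun ε : ℝ => a - ε * b := by fun_prop
    simpa using (this.tendsto 0).mono_left nhdsWithin_le_nhds
  exact eventually_mem_nhdsWithin.and (hlim.eventually_const_lt ha)

theorem exists_step_of_eventually_not {P : ℝ → Prop} {x₀ c : ℝ} (hc : 0 < c) (h₀ : P x₀)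
    (hev : ∀ᶠ x in atTop, ¬ P x) : ∃ x, x₀ ≤ x ∧ P x ∧ ¬ P (x + c) := by
  by_contra! hstep
  have hchain : ∀ k : ℕ, P (x₀ + k * c) := by
    intro k
    induction k with
    | zero => simpa using h₀
    | succ k ih =>
      have := hstep _ (le_add_of_nonneg_right (by positivity)) ih
      rwa [Nat.cast_succ, add_one_mul, ← add_assoc]
  have hlim : Tendsto (fun k : ℕ => x₀ + k * c) atTop atTop :=
    tendsto_atTop_add_const_left _ _ (tendsto_natCast_atTop_atTop.atTop_mul_const hc)
  obtain ⟨k, hk⟩ := (hlim.eventually hev).exists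
  exact hk (hchain k)

theorem OneSwitchSign.neg {Δ : ℝ → ℝ} (h : OneSwitchSign Δ) : OneSwitchSign (-Δ) := by
  unfold OneSwitchSign at *
  simp only [Pi.neg_apply, neg_pos, neg_lt_zero, neg_eq_zero, neg_mul_neg]
  rcases h with h | h | h | h
  exacts [Or.inr (Or.inl h), Or.inl h, Or.inr (Or.inr (Or.inl h)), Or.inr (Or.inr (Or.inr h))]

theorem OneSwitchSign.not_doubleSwitch {Δ : ℝ → ℝ} (h : OneSwitchSign Δ) : ¬ DoubleSwitch Δ := by
  rintro ⟨σ₁, σ₂, σ₃, h₁, h₁₂, h₂₃, hpat⟩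
  have hσ₂ : 0 ≤ σ₂ := h₁.trans h₁₂.le
  have hσ₃ : 0 ≤ σ₃ := hσ₂.trans h₂₃.le
  have h₁₂' : Δ σ₁ * Δ σ₂ < 0 := by
    rcases hpat with ⟨ha, hb, -⟩ | ⟨ha, hb, -⟩
    exacts [mul_neg_of_pos_of_neg ha hb, mul_neg_of_neg_of_pos ha hb]
  have h₂₃' : Δ σ₂ * Δ σ₃ < 0 := by
    rcases hpat with ⟨-, hb, hc⟩ | ⟨-, hb, hc⟩
    exacts [mul_neg_of_neg_of_pos hb hc, mul_neg_of_pos_of_neg hb hc]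
  rcases h with hpos | hneg | hzero | ⟨σs, -, hiff, hsame, -⟩
  · exact h₁₂'.not_ge (mul_pos (hpos σ₁ h₁) (hpos σ₂ hσ₂)).le
  · exact h₁₂'.not_ge (mul_pos_of_neg_of_neg (hneg σ₁ h₁) (hneg σ₂ hσ₂)).le
  · simp [hzero σ₂ hσ₂] at h₁₂'
  · rcases lt_trichotomy σ₂ σs with hlt | heq | hgt
    · exact h₁₂'.not_gt (hsame σ₁ σ₂ h₁ hσ₂ (Or.inl ⟨h₁₂.trans hlt, hlt⟩))
    · simp [(hiff σ₂ hσ₂).2 heq] at h₁₂'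
    · exact h₂₃'.not_gt (hsame σ₂ σ₃ hσ₂ hσ₃ (Or.inr ⟨hgt, hgt.trans h₂₃⟩))

theorem oneSwitchSign_of_pos_of_neg {Δ : ℝ → ℝ} {σs : ℝ} (hσs : 0 ≤ σs) (hzero : Δ σs = 0)
    (hpos : ∀ σ, 0 ≤ σ → σ < σs → 0 < Δ σ) (hneg : ∀ σ, σs < σ → Δ σ < 0) :
    OneSwitchSign Δ := by
  refine Or.inr (Or.inr (Or.inr ⟨σs, hσs, fun σ hσ => ⟨fun h => ?_, fun h => h ▸ hzero⟩,
    ?_, fun σ' σ'' h' h₁ h₂ => mul_neg_of_pos_of_neg (hpos σ' h' h₁) (hneg σ'' h₂)⟩))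
  · rcases lt_trichotomy σ σs with hlt | heq | hgt
    · exact absurd h (hpos σ hσ hlt).ne'
    · exact heq
    · exact absurd h (hneg σ hgt).ne
  · rintro σ' σ'' h' h'' (⟨h₁, h₂⟩ | ⟨h₁, h₂⟩)
    exacts [mul_pos (hpos σ' h' h₁) (hpos σ'' h'' h₂),
      mul_pos_of_neg_of_neg (hneg σ' h₁) (hneg σ'' h₂)]

/-- Present values of finite signed payment streams, as functions of the common delay `σ`. -/
def discountSpan (D : ℝ → ℝ) : Submodule ℝ (ℝ → ℝ) :=
  Submodule.span ℝ ((fun x σ => D (x + σ)) '' Ici 0)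

namespace discountSpan

variable {D f : ℝ → ℝ}

theorem discount_mem : D ∈ discountSpan D :=
  Submodule.subset_span ⟨0, self_mem_Ici, by simp⟩

theorem comp_add_mem (hf : f ∈ discountSpan D) {c : ℝ} (hc : 0 ≤ c) :
    (fun σ => f (σ + c)) ∈ discountSpan D := by
  have hmap : (discountSpan D).map (LinearMap.funLeft ℝ ℝ (· + c)) ≤ discountSpan D := by
    rw [discountSpan, Submodule.map_span]
    refine Submodule.span_mono ?_
    rintro _ ⟨_, ⟨x, hx, rfl⟩, rfl⟩
    exact ⟨x + c, add_nonneg hx hc, by ext σ; simp [LinearMap.funLeft, add_assoc, add_comm c]⟩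
  exact hmap ⟨f, hf, rfl⟩

theorem diffFn_mem {n m : ℕ} (t : Fin n → ℝ) (s : Fin m → ℝ) (v : Fin n → ℝ) (w : Fin m → ℝ)
    (ht : ∀ i, 0 ≤ t i) (hs : ∀ j, 0 ≤ s j) : diffFn D t s v w ∈ discountSpan D := by
  have hgen : ∀ x, 0 ≤ x → (fun σ => D (x + σ)) ∈ discountSpan D :=
    fun x hx => Submodule.subset_span ⟨x, hx, rfl⟩
  have hsum : diffFn D t s v w =
      ∑ i, v i • (fun σ => D (t i + σ)) - ∑ j, w j • (fun σ => D (s j + σ)) := by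
    ext σ
    simp [diffFn, Finset.sum_apply, mul_comm]
  rw [hsum]
  exact sub_mem (sum_mem fun i _ => Submodule.smul_mem _ _ (hgen _ (ht i)))
    (sum_mem fun j _ => Submodule.smul_mem _ _ (hgen _ (hs j)))

theorem continuousOn (hDc : ContinuousOn D (Ici 0)) (hf : f ∈ discountSpan D) :
    ContinuousOn f (Ici 0) := by
  induction hf using Submodule.span_induction with
  | mem g hg =>
    obtain ⟨x, hx, rfl⟩ := hg
    exact hDc.comp (continuousOn_const.add continuousOn_id)
      fun σ hσ => mem_Ici.2 (add_nonneg hx hσ)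
  | zero => exact continuousOn_const
  | add g h _ _ hg hh => exact hg.add hh
  | smul a g _ hg => exact hg.const_smul a

theorem sum_eq_diffFn (F : Finset ℝ) (c : ℝ → ℝ) :
    (fun σ => ∑ x ∈ F, c x * D (x + σ)) =
      diffFn D (F.orderEmbOfFin rfl) (F.orderEmbOfFin rfl)
        (fun i => (c (F.orderEmbOfFin rfl i))⁺) (fun i => (c (F.orderEmbOfFin rfl i))⁻) := by
  ext σ
  simp only [diffFn, ← Finset.sum_sub_distrib, ← mul_sub, posPart_sub_negPart]
  conv_lhs => rw [← F.image_orderEmbOfFin_univ rfl]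
  rw [Finset.sum_image (F.orderEmbOfFin rfl).injective.injOn]
  simp only [mul_comm]

theorem not_doubleSwitch (hW : ExtWeakOneSwitch D) (hf : f ∈ discountSpan D) :
    ¬ DoubleSwitch f := by
  classical
  obtain ⟨l, hl, rfl⟩ := (Finsupp.mem_span_image_iff_linearCombination ℝ).1 hf
  set F := insert 0 l.support
  have hF : ∀ x ∈ F, 0 ≤ x := by
    simp only [F, Finset.mem_insert]
    rintro x (rfl | hx)
    exacts [le_rfl, hl hx]
  have hsum : Finsupp.linearCombination ℝ (fun x σ => D (x + σ)) l =
      fun σ => ∑ x ∈ F, l x * D (x + σ) := by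
    rw [Finsupp.linearCombination_apply, Finsupp.sum_of_support_subset l
      (Finset.subset_insert 0 l.support) (fun x a => a • fun σ => D (x + σ))
      (fun _ _ => zero_smul ℝ _)]
    ext σ
    simp [F, Finset.sum_apply]
  have hcard : 0 < F.card := Finset.card_pos.2 (Finset.insert_nonempty 0 _)
  rw [hsum, sum_eq_diffFn]
  exact hW _ _ hcard hcard _ _ _ _ (F.orderEmbOfFin rfl).strictMono
    (F.orderEmbOfFin rfl).strictMono (fun i => hF _ (F.orderEmbOfFin_mem rfl i))
    (fun i => hF _ (F.orderEmbOfFin_mem rfl i)) (fun _ => posPart_nonneg _)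
    (fun _ => negPart_nonneg _)

/-- Subtracting a small multiple of `D > 0` turns the weak signs into strict ones. -/
theorem false_of_nonpos_pos_nonpos (hD : ∀ σ, 0 ≤ σ → 0 < D σ)
    (hW : ∀ g ∈ discountSpan D, ¬ DoubleSwitch g) (hf : f ∈ discountSpan D) {x y z : ℝ}
    (hx : 0 ≤ x) (hxy : x < y) (hyz : y < z)
    (h : f x ≤ 0 ∧ 0 < f y ∧ f z ≤ 0 ∨ 0 < f x ∧ f y ≤ 0 ∧ 0 < f z) : False := by
  have hy : 0 ≤ y := hx.trans hxy.le
  have hz : 0 ≤ z := hy.trans hyz.le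
  have hmem : ∀ ε : ℝ, f - ε • D ∈ discountSpan D :=
    fun ε => sub_mem hf (Submodule.smul_mem _ ε discount_mem)
  have hneg : ∀ p, 0 ≤ p → f p ≤ 0 → ∀ ε : ℝ, 0 < ε → (f - ε • D) p < 0 := by
    intro p hp hfp ε hε
    simp only [Pi.sub_apply, Pi.smul_apply, smul_eq_mul]
    linarith [mul_pos hε (hD p hp)]
  rcases h with ⟨h₁, h₂, h₃⟩ | ⟨h₁, h₂, h₃⟩
  · obtain ⟨ε, hε, hεy⟩ := (eventually_pos_sub_mul h₂ (D y)).exists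
    exact hW _ (hmem ε) ⟨x, y, z, hx, hxy, hyz, Or.inr ⟨hneg x hx h₁ ε hε, hεy, hneg z hz h₃ ε hε⟩⟩
  · obtain ⟨ε, ⟨hε, hεx⟩, -, hεz⟩ :=
      ((eventually_pos_sub_mul h₁ (D x)).and (eventually_pos_sub_mul h₃ (D z))).exists
    exact hW _ (hmem ε) ⟨x, y, z, hx, hxy, hyz, Or.inl ⟨hεx, hneg y hy h₂ ε hε, hεz⟩⟩

theorem false_of_nonneg_neg_nonneg (hD : ∀ σ, 0 ≤ σ → 0 < D σ)
    (hW : ∀ g ∈ discountSpan D, ¬ DoubleSwitch g) (hf : f ∈ discountSpan D) {x y z : ℝ}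
    (hx : 0 ≤ x) (hxy : x < y) (hyz : y < z)
    (h : 0 ≤ f x ∧ f y < 0 ∧ 0 ≤ f z ∨ f x < 0 ∧ 0 ≤ f y ∧ f z < 0) : False :=
  false_of_nonpos_pos_nonpos hD hW (neg_mem hf) hx hxy hyz (by simpa using h)

/-- Walking from `q` in steps of `c = q - p` one meets a step `b ↦ b + c` from `f ≤ 0` to `f > 0`;
then `f - μ f(· + c)`, for small `μ > 0`, has signs `0, -, +` at `p < b < b + c`. -/
theorem not_eventually_pos (hD : ∀ σ, 0 ≤ σ → 0 < D σ)
    (hW : ∀ g ∈ discountSpan D, ¬ DoubleSwitch g) (hf : f ∈ discountSpan D) {p q : ℝ}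
    (hp : 0 ≤ p) (hpq : p < q) (hfp : f p = 0) (hfq : f q = 0) :
    ¬ ∀ᶠ x in atTop, 0 < f x := by
  intro hev
  have hc : 0 < q - p := sub_pos.2 hpq
  obtain ⟨b, hqb, hb, hbc⟩ := exists_step_of_eventually_not (P := fun x => f x ≤ 0) hc hfq.le
    (hev.mono fun _ => not_le.2)
  rw [not_le] at hbc
  obtain ⟨μ, hμ, hμb⟩ := (eventually_pos_sub_mul hbc (f (b + (q - p) + (q - p)))).exists
  have hg : f - μ • (fun σ => f (σ + (q - p))) ∈ discountSpan D :=
    sub_mem hf (Submodule.smul_mem _ μ (comp_add_mem hf hc.le))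
  refine false_of_nonneg_neg_nonneg hD hW hg hp (hpq.trans_le hqb) (lt_add_of_pos_right b hc)
    (Or.inl ⟨?_, ?_, hμb.le⟩)
  · show 0 ≤ f p - μ * f (p + (q - p))
    rw [add_sub_cancel, hfp, hfq, mul_zero, sub_zero]
  · show f b - μ * f (b + (q - p)) < 0
    linarith [mul_pos hμ hbc]

/-- Walking from `c` in steps of `c` one meets a step `v ↦ v + c` from `f > 0` to `f ≤ 0`;
then `f(· + c) - μ f`, for small `μ > 0`, has signs `+, -, 0` at `v - c < v < z` for `z` in the
zero tail. -/
theorem nonpos_of_eventually_zero (hD : ∀ σ, 0 ≤ σ → 0 < D σ)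
    (hW : ∀ g ∈ discountSpan D, ¬ DoubleSwitch g) (hf : f ∈ discountSpan D)
    (hev : ∀ᶠ x in atTop, f x = 0) {c : ℝ} (hc : 0 < c) : f c ≤ 0 := by
  by_contra! hfc
  obtain ⟨v, hcv, hv, hvc⟩ := exists_step_of_eventually_not (P := fun x => 0 < f x) hc hfc
    (hev.mono fun _ hx => hx.le.not_gt)
  rw [not_lt] at hvc
  obtain ⟨μ, hμ, hμv⟩ := (eventually_pos_sub_mul hv (f (v - c))).exists
  obtain ⟨z, hvz, hz, hzc⟩ := ((eventually_gt_atTop v).and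
    (hev.and ((tendsto_atTop_add_const_right _ c tendsto_id).eventually hev))).exists
  have hg : (fun σ => f (σ + c)) - μ • f ∈ discountSpan D :=
    sub_mem (comp_add_mem hf hc.le) (Submodule.smul_mem _ μ hf)
  refine false_of_nonneg_neg_nonneg hD hW hg (sub_nonneg.2 hcv) (sub_lt_self v hc) hvz
    (Or.inl ⟨?_, ?_, ?_⟩)
  · show 0 ≤ f (v - c + c) - μ * f (v - c)
    rw [sub_add_cancel]
    exact hμv.le
  · show f (v + c) - μ * f v < 0
    linarith [mul_pos hμ hv]
  · show 0 ≤ f (z + c) - μ * f z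
    rw [hz, show f (z + c) = 0 from hzc, mul_zero, sub_zero]

theorem eqOn_zero_of_eventually_zero (hDc : ContinuousOn D (Ici 0))
    (hD : ∀ σ, 0 ≤ σ → 0 < D σ) (hW : ∀ g ∈ discountSpan D, ¬ DoubleSwitch g)
    (hf : f ∈ discountSpan D) (hev : ∀ᶠ x in atTop, f x = 0) : ∀ σ, 0 ≤ σ → f σ = 0 := by
  have hpos : ∀ σ, 0 < σ → f σ = 0 := fun σ hσ =>
    le_antisymm (nonpos_of_eventually_zero hD hW hf hev hσ) <| by
      simpa using nonpos_of_eventually_zero hD hW (neg_mem hf)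
        (hev.mono fun _ hx => by simp [hx]) hσ
  intro σ hσ
  rcases hσ.eq_or_lt with rfl | hσ
  · have hlim : Tendsto f (𝓝[>] 0) (𝓝 (f 0)) :=
      ((continuousOn hDc hf 0 self_mem_Ici).mono Ioi_subset_Ici_self).tendsto
    exact tendsto_nhds_unique hlim
      (tendsto_const_nhds.congr' (eventually_nhdsWithin_of_forall fun x hx => (hpos x hx).symm))
  · exact hpos σ hσ

theorem eqOn_zero_of_two_zeros (hDc : ContinuousOn D (Ici 0))
    (hD : ∀ σ, 0 ≤ σ → 0 < D σ) (hW : ∀ g ∈ discountSpan D, ¬ DoubleSwitch g)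
    (hf : f ∈ discountSpan D) {p q : ℝ} (hp : 0 ≤ p) (hpq : p < q) (hfp : f p = 0)
    (hfq : f q = 0) : ∀ σ, 0 ≤ σ → f σ = 0 := by
  have hbeyond : ∀ g ∈ discountSpan D, g p = 0 → g q = 0 → ∀ y, q < y → g y ≤ 0 := by
    intro g hg hgp hgq y hqy
    by_contra! hgy
    refine not_eventually_pos hD hW hg hp hpq hgp hgq ?_
    filter_upwards [eventually_gt_atTop y] with z hyz
    by_contra! hgz
    exact false_of_nonpos_pos_nonpos hD hW hg hp (hpq.trans hqy) hyz (Or.inl ⟨hgp.le, hgy, hgz⟩)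
  refine eqOn_zero_of_eventually_zero hDc hD hW hf ?_
  filter_upwards [eventually_gt_atTop q] with y hy
  have hneg := hbeyond (-f) (neg_mem hf) (by simp [hfp]) (by simp [hfq]) y hy
  exact le_antisymm (hbeyond f hf hfp hfq y hy) (by simpa using hneg)

theorem oneSwitchSign_of_unique_zero (hD : ∀ σ, 0 ≤ σ → 0 < D σ)
    (hW : ∀ g ∈ discountSpan D, ¬ DoubleSwitch g) (hf : f ∈ discountSpan D) {σs : ℝ}
    (hσs : 0 ≤ σs) (hzero : f σs = 0) (hne : ∀ σ, 0 ≤ σ → σ ≠ σs → f σ ≠ 0)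
    (hneg : ∀ σ, σs < σ → f σ < 0) : OneSwitchSign f := by
  refine oneSwitchSign_of_pos_of_neg hσs hzero (fun σ hσ hlt => ?_) hneg
  refine (hne σ hσ hlt.ne).lt_or_gt.resolve_left fun hfσ => ?_
  exact false_of_nonneg_neg_nonneg hD hW hf hσ hlt (lt_add_one σs)
    (Or.inr ⟨hfσ, hzero.ge, hneg _ (lt_add_one σs)⟩)

theorem oneSwitchSign (hDc : ContinuousOn D (Ici 0)) (hD : ∀ σ, 0 ≤ σ → 0 < D σ)
    (hW : ∀ g ∈ discountSpan D, ¬ DoubleSwitch g) (hf : f ∈ discountSpan D) :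
    OneSwitchSign f := by
  have hfc := continuousOn hDc hf
  by_cases hzero : ∃ σs, 0 ≤ σs ∧ f σs = 0
  · obtain ⟨σs, hσs, hfσs⟩ := hzero
    by_cases htwo : ∃ σ, 0 ≤ σ ∧ σ ≠ σs ∧ f σ = 0
    · obtain ⟨σ, hσ, hne, hfσ⟩ := htwo
      refine Or.inr (Or.inr (Or.inl ?_))
      rcases hne.lt_or_gt with hlt | hgt
      · exact eqOn_zero_of_two_zeros hDc hD hW hf hσ hlt hfσ hfσs
      · exact eqOn_zero_of_two_zeros hDc hD hW hf hσs hgt hfσs hfσ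
    push Not at htwo
    have hright : ∀ σ ∈ Ioi σs, f σ ≠ 0 := fun σ hσ => htwo σ (hσs.trans hσ.out.le) hσ.out.ne'
    rcases isPreconnected_Ioi.forall_pos_or_forall_neg
      (hfc.mono fun σ hσ => mem_Ici.2 (hσs.trans (le_of_lt hσ))) hright with hpos | hneg
    · have := oneSwitchSign_of_unique_zero hD hW (neg_mem hf) hσs (by simp [hfσs])
        (fun σ hσ hne => neg_ne_zero.2 (htwo σ hσ hne)) (fun σ hσ => neg_lt_zero.2 (hpos σ hσ))
      simpa using this.neg
    · exact oneSwitchSign_of_unique_zero hD hW hf hσs hfσs htwo hneg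
  · push Not at hzero
    rcases isPreconnected_Ici.forall_pos_or_forall_neg hfc hzero with hpos | hneg
    exacts [Or.inl hpos, Or.inr (Or.inl hneg)]

end discountSpan

theorem ext_one_switch_iff_ext_weak_one_switch (D : ℝ → ℝ) (hD : IsDiscount D)
    (hcont : ContinuousOn D (Set.Ici 0)) :
    ExtOneSwitch D ↔ ExtWeakOneSwitch D := by
  constructor
  · intro h n m hn hm t s v w ht hs ht₀ hs₀ hv hw
    exact (h n m hn hm t s v w ht hs ht₀ hs₀ hv hw).not_doubleSwitch
  · intro hW n m _ _ t s v w _ _ ht₀ hs₀ _ _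
    exact discountSpan.oneSwitchSign hcont hD.2.1 (fun _ => discountSpan.not_doubleSwitch hW)
      (discountSpan.diffFn_mem t s v w ht₀ hs₀)
end

section
/- Let u be a utility function and D a continuous discount function, and suppose D exhibits decreasing impatience (DI) or increasing impatience (II). Then the pair (u, D) exhibits the weak one-switch property for dated outcomes: there do not exist x, y ∈ [0,∞), t, s ≥ 0 and 0 ≤ σ₁ < σ₂ < σ₃ such that D(t+σ₁)u(x) > D(s+σ₁)u(y), D(t+σ₂)u(x) < D(s+σ₂)u(y) and D(t+σ₃)u(x) > D(s+σ₃)u(y), nor with all three strict inequalities reversed. -/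
/-- From DI, the cross-product inequality: for `t < s` and `σ < σ'`,
`D (t+σ') * D (s+σ) ≤ D (t+σ) * D (s+σ')`. -/
lemma di_cross {D : ℝ → ℝ} (hpos : ∀ r, 0 ≤ r → 0 < D r) (hDI : DI D)
    {t s σ σ' : ℝ} (ht : 0 ≤ t) (hs : 0 ≤ s) (hts : t < s) (hσ : 0 ≤ σ) (hσ' : σ < σ') :
    D (t + σ') * D (s + σ) ≤ D (t + σ) * D (s + σ') := by
  have h := hDI (t + σ) (s + σ) (σ' - σ) (by linarith) (by linarith) (by linarith)
  rw [show s + σ + (σ' - σ) = s + σ' by ring, show t + σ + (σ' - σ) = t + σ' by ring] at h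
  have p1 := hpos (s + σ') (by linarith)
  have p2 := hpos (t + σ') (by linarith)
  rw [div_le_div_iff₀ p1 p2] at h
  nlinarith [h]

/-- From II, the reverse cross-product inequality. -/
lemma ii_cross {D : ℝ → ℝ} (hpos : ∀ r, 0 ≤ r → 0 < D r) (hII : II D)
    {t s σ σ' : ℝ} (ht : 0 ≤ t) (hs : 0 ≤ s) (hts : t < s) (hσ : 0 ≤ σ) (hσ' : σ < σ') :
    D (t + σ) * D (s + σ') ≤ D (t + σ') * D (s + σ) := by
  have h := hII (t + σ) (s + σ) (σ' - σ) (by linarith) (by linarith) (by linarith)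
  rw [show s + σ + (σ' - σ) = s + σ' by ring, show t + σ + (σ' - σ) = t + σ' by ring] at h
  have p1 := hpos (s + σ') (by linarith)
  have p2 := hpos (t + σ') (by linarith)
  rw [div_le_div_iff₀ p2 p1] at h
  nlinarith [h]

theorem monotone_impatience_implies_weak_one_switch_dated (u D : ℝ → ℝ)
    (hu : IsUtility u) (hD : IsDiscount D) (hcont : ContinuousOn D (Set.Ici 0))
    (himp : DI D ∨ II D) :
    ¬ ∃ (x y t s σ₁ σ₂ σ₃ : ℝ), 0 ≤ x ∧ 0 ≤ y ∧ 0 ≤ t ∧ 0 ≤ s ∧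
      0 ≤ σ₁ ∧ σ₁ < σ₂ ∧ σ₂ < σ₃ ∧
      ((D (s + σ₁) * u y < D (t + σ₁) * u x ∧ D (t + σ₂) * u x < D (s + σ₂) * u y ∧
        D (s + σ₃) * u y < D (t + σ₃) * u x) ∨
       (D (t + σ₁) * u x < D (s + σ₁) * u y ∧ D (s + σ₂) * u y < D (t + σ₂) * u x ∧
        D (t + σ₃) * u x < D (s + σ₃) * u y)) := by
  rintro ⟨x, y, t, s, σ₁, σ₂, σ₃, hx, hy, ht, hs, hσ₁, h12, h23, hcase⟩
  obtain ⟨hD0, hpos, hanti, hlim⟩ := hD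
  obtain ⟨hucont, humono, hu0⟩ := hu
  -- u x ≥ 0
  have hux : 0 ≤ u x := by
    rcases eq_or_lt_of_le hx with h | h
    · rw [← h, hu0]
    · have := humono (Set.mem_Ici.2 le_rfl) (Set.mem_Ici.2 hx) h
      rw [hu0] at this; exact this.le
  have hσ₂ : 0 ≤ σ₂ := le_of_lt (lt_of_le_of_lt hσ₁ h12)
  -- positivity of discount values
  have pB1 : 0 < D (s + σ₁) := hpos _ (by linarith)
  have pB2 : 0 < D (s + σ₂) := hpos _ (by linarith)
  have pB3 : 0 < D (s + σ₃) := hpos _ (by linarith)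
  -- the ratio D (t + ·) / D (s + ·) is monotone one way or the other:
  have hkey : (D (t + σ₁) * D (s + σ₂) ≤ D (t + σ₂) * D (s + σ₁) ∧
               D (t + σ₂) * D (s + σ₃) ≤ D (t + σ₃) * D (s + σ₂)) ∨
              (D (t + σ₂) * D (s + σ₁) ≤ D (t + σ₁) * D (s + σ₂) ∧
               D (t + σ₃) * D (s + σ₂) ≤ D (t + σ₂) * D (s + σ₃)) := by
    rcases lt_trichotomy t s with hts | hts | hts
    · rcases himp with hDI | hII
      · exact Or.inr ⟨di_cross hpos hDI ht hs hts hσ₁ h12,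
          di_cross hpos hDI ht hs hts hσ₂ h23⟩
      · exact Or.inl ⟨ii_cross hpos hII ht hs hts hσ₁ h12,
          ii_cross hpos hII ht hs hts hσ₂ h23⟩
    · subst hts
      exact Or.inl ⟨by rw [mul_comm], by rw [mul_comm]⟩
    · rcases himp with hDI | hII
      · have k1 := di_cross hpos hDI hs ht hts hσ₁ h12
        have k2 := di_cross hpos hDI hs ht hts hσ₂ h23
        exact Or.inl ⟨by nlinarith [k1], by nlinarith [k2]⟩
      · have k1 := ii_cross hpos hII hs ht hts hσ₁ h12
        have k2 := ii_cross hpos hII hs ht hts hσ₂ h23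
        exact Or.inr ⟨by nlinarith [k1], by nlinarith [k2]⟩
  rcases hcase with ⟨h1, h2, h3⟩ | ⟨h1, h2, h3⟩ <;> rcases hkey with ⟨k1, k2⟩ | ⟨k1, k2⟩
  · -- up-down-up, ratio increasing: contradiction from h1, h2, k1
    nlinarith [mul_le_mul_of_nonneg_right k1 hux,
      mul_lt_mul_of_pos_right h1 pB2, mul_lt_mul_of_pos_right h2 pB1]
  · -- up-down-up, ratio decreasing: contradiction from h2, h3, k2
    nlinarith [mul_le_mul_of_nonneg_right k2 hux,
      mul_lt_mul_of_pos_right h2 pB3, mul_lt_mul_of_pos_right h3 pB2]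
  · -- down-up-down, ratio increasing: contradiction from h2, h3, k2
    nlinarith [mul_le_mul_of_nonneg_right k2 hux,
      mul_lt_mul_of_pos_right h2 pB3, mul_lt_mul_of_pos_right h3 pB2]
  · -- down-up-down, ratio decreasing: contradiction from h1, h2, k1
    nlinarith [mul_le_mul_of_nonneg_right k1 hux,
      mul_lt_mul_of_pos_right h1 pB2, mul_lt_mul_of_pos_right h2 pB1]
end

section
/- Let a, b, c > 0 with a ≤ 1 + b/c and define D(t) = a·e^{−bt} + (1 − a)·e^{−(b+c)t} for t ∈ [0,∞). If a < 1, then D(s + t) > D(s)·D(t) for all s, t > 0; and if 1 < a ≤ 1 + b/c, then D(s + t) < D(s)·D(t) for all s, t > 0. -/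
theorem sum_of_exponentials_di_star_ii_star (a b c : ℝ) (ha : 0 < a) (hb : 0 < b)
    (hc : 0 < c) (habc : a ≤ 1 + b / c) (D : ℝ → ℝ)
    (hD : ∀ t, D t = a * Real.exp (-b * t) + (1 - a) * Real.exp (-(b + c) * t)) :
    (a < 1 → ∀ s t : ℝ, 0 < s → 0 < t → D s * D t < D (s + t)) ∧
    (1 < a → ∀ s t : ℝ, 0 < s → 0 < t → D (s + t) < D s * D t) := by
  have key : ∀ s t : ℝ, 0 < s → 0 < t →
      D (s + t) - D s * D t =
        Real.exp (-b * s) * Real.exp (-b * t) * (a * (1 - a) *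
          (1 - Real.exp (-c * s)) * (1 - Real.exp (-c * t))) := by
    intro s t hs ht
    have e1 : Real.exp (-b * (s + t)) = Real.exp (-b * s) * Real.exp (-b * t) := by
      rw [← Real.exp_add]; ring_nf
    have e2 : Real.exp (-(b + c) * (s + t)) =
        Real.exp (-b * s) * Real.exp (-b * t) * Real.exp (-c * s) * Real.exp (-c * t) := by
      rw [← Real.exp_add, ← Real.exp_add, ← Real.exp_add]; ring_nf
    have e3 : Real.exp (-(b + c) * s) = Real.exp (-b * s) * Real.exp (-c * s) := by
      rw [← Real.exp_add]; ring_nf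
    have e4 : Real.exp (-(b + c) * t) = Real.exp (-b * t) * Real.exp (-c * t) := by
      rw [← Real.exp_add]; ring_nf
    rw [hD, hD, hD, e1, e2, e3, e4]; ring
  constructor
  · intro ha1 s t hs ht
    have h := key s t hs ht
    have hu : Real.exp (-c * s) < 1 := by
      apply Real.exp_lt_one_iff.mpr; nlinarith
    have hv : Real.exp (-c * t) < 1 := by
      apply Real.exp_lt_one_iff.mpr; nlinarith
    have h1 := Real.exp_pos (-b * s)
    have h2 := Real.exp_pos (-b * t)
    nlinarith [mul_pos (mul_pos (mul_pos (mul_pos h1 h2) (mul_pos ha (by linarith : (0:ℝ) < 1 - a))) (by linarith : (0:ℝ) < 1 - Real.exp (-c * s))) (by linarith : (0:ℝ) < 1 - Real.exp (-c * t))]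
  · intro ha1 s t hs ht
    have h := key s t hs ht
    have hu : Real.exp (-c * s) < 1 := by
      apply Real.exp_lt_one_iff.mpr; nlinarith
    have hv : Real.exp (-c * t) < 1 := by
      apply Real.exp_lt_one_iff.mpr; nlinarith
    have h1 := Real.exp_pos (-b * s)
    have h2 := Real.exp_pos (-b * t)
    nlinarith [mul_pos (mul_pos (mul_pos (mul_pos h1 h2) (mul_pos ha (by linarith : (0:ℝ) < a - 1))) (by linarith : (0:ℝ) < 1 - Real.exp (-c * s))) (by linarith : (0:ℝ) < 1 - Real.exp (-c * t))]
end
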